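/- arXiv:2510.09265 — 4 statements merged into one kernel-verified Lean document; each statement's English description precedes it below -/
import Mathlib

section
/- For any nonzero vector u in R^d, the hyperplane u^⊥ = {x in R^d : <u,x> = 0} either intersects all 2d facets of the cube C_d (not necessarily in their relative interiors), or it intersects all facets except exactly one pair of two parallel facets; in the latter case the slice C_d ∩ u^⊥ is combinatorially equivalent to the cube C_{d-1}. -/
open scoped RealInnerProductSpace

noncomputable section

/-- The `d`-dimensional cube `C_d = [-1,1]^d`. -/
def cube (d : ℕ) : Set (EuclideanSpace ℝ (Fin d)) := {x | ∀ i, |x i| ≤ 1}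

/-- The vertex set `{-1,1}^d` of the cube `C_d`. -/
def cubeVertices (d : ℕ) : Set (EuclideanSpace ℝ (Fin d)) := {x | ∀ i, x i = 1 ∨ x i = -1}

/-- The (affine) dimension of a subset of Euclidean space: the dimension of the direction of
its affine span. -/
def adim {d : ℕ} (S : Set (EuclideanSpace ℝ (Fin d))) : ℕ :=
  Module.finrank ℝ (affineSpan ℝ S).direction

/-- Two sets (e.g. polytopes) are combinatorially equivalent if their posets of exposed faces
(i.e., their face lattices), ordered by inclusion, are order-isomorphic. -/
def CombEquiv {d e : ℕ} (P : Set (EuclideanSpace ℝ (Fin d)))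
    (Q : Set (EuclideanSpace ℝ (Fin e))) : Prop :=
  Nonempty ({F : Set (EuclideanSpace ℝ (Fin d)) // IsExposed ℝ P F} ≃o
            {G : Set (EuclideanSpace ℝ (Fin e)) // IsExposed ℝ Q G})

/-- The facet of the cube `C_d` on which the `j`-th coordinate equals `s` (for `s = ±1`). -/
def cubeFacet (d : ℕ) (j : Fin d) (s : ℝ) : Set (EuclideanSpace ℝ (Fin d)) :=
  {x ∈ cube d | x j = s}

private lemma inner_sum' {d : ℕ} (u x : EuclideanSpace ℝ (Fin d)) :
    ⟪u, x⟫ = ∑ i, u i * x i := by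
  simp [PiLp.inner_apply, RCLike.inner_apply, mul_comm]

private lemma mul_sign' (t : ℝ) : t * Real.sign t = |t| := by
  rcases lt_trichotomy t 0 with h | h | h
  · rw [Real.sign_of_neg h, abs_of_neg h]; ring
  · simp [h]
  · rw [Real.sign_of_pos h, abs_of_pos h]; ring

private lemma abs_sign_le (t : ℝ) : |Real.sign t| ≤ 1 := by
  rcases lt_trichotomy t 0 with h | h | h
  · rw [Real.sign_of_neg h]; norm_num
  · simp [h]
  · rw [Real.sign_of_pos h]; norm_num

private lemma facet_meets {d : ℕ} (u : EuclideanSpace ℝ (Fin d)) (hu : u ≠ 0) (j : Fin d)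
    (s : ℝ) (hs : |s| = 1)
    (h : |u j| ≤ ∑ i ∈ Finset.univ.erase j, |u i|) :
    (cubeFacet d j s ∩ {x | ⟪u, x⟫ = 0}).Nonempty := by
  set S := ∑ i ∈ Finset.univ.erase j, |u i| with hS
  have hS0 : 0 ≤ S := Finset.sum_nonneg fun i _ => abs_nonneg _
  rcases eq_or_lt_of_le hS0 with hS0' | hSpos
  · exfalso
    apply hu
    have hj : u j = 0 := abs_nonpos_iff.1 (hS0' ▸ h)
    have hall : ∀ i ∈ Finset.univ.erase j, |u i| = 0 :=
      (Finset.sum_eq_zero_iff_of_nonneg (fun i _ => abs_nonneg _)).1 hS0'.symm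
    ext i
    by_cases hij : i = j
    · rw [hij]; exact hj
    · exact abs_eq_zero.1 (hall i (Finset.mem_erase.2 ⟨hij, Finset.mem_univ i⟩))
  · set c := (-s * u j) / S with hc
    set x : EuclideanSpace ℝ (Fin d) := WithLp.toLp 2 (fun i => if i = j then s else c * Real.sign (u i)) with hx
    have hxj : x j = s := by simp [hx]
    have hxi : ∀ i, i ≠ j → x i = c * Real.sign (u i) := fun i hij => by simp [hx, hij]
    have habsc : |c| ≤ 1 := by
      rw [hc, abs_div, abs_of_pos hSpos, abs_mul, abs_neg, hs, one_mul]
      exact div_le_one_of_le₀ h hS0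
    refine ⟨x, ⟨⟨fun i => ?_, hxj⟩, ?_⟩⟩
    · by_cases hij : i = j
      · rw [hij, hxj, hs]
      · rw [hxi i hij, abs_mul]
        calc |c| * |Real.sign (u i)| ≤ 1 * 1 :=
              mul_le_mul habsc (abs_sign_le _) (abs_nonneg _) zero_le_one
          _ = 1 := one_mul 1
    · show ⟪u, x⟫ = 0
      rw [inner_sum', ← Finset.add_sum_erase _ _ (Finset.mem_univ j), hxj]
      have hsum : ∑ i ∈ Finset.univ.erase j, u i * x i = c * S := by
        rw [hS, Finset.mul_sum]
        refine Finset.sum_congr rfl fun i hi => ?_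
        rw [hxi i (Finset.ne_of_mem_erase hi), ← mul_sign' (u i)]
        ring
      rw [hsum, hc]
      field_simp
      ring

private lemma facet_misses {d : ℕ} (u : EuclideanSpace ℝ (Fin d)) (j : Fin d)
    (s : ℝ) (hs : |s| = 1)
    (h : ∑ i ∈ Finset.univ.erase j, |u i| < |u j|) :
    cubeFacet d j s ∩ {x | ⟪u, x⟫ = 0} = ∅ := by
  rw [Set.eq_empty_iff_forall_notMem]
  rintro x ⟨⟨hx1, hxj⟩, hx2⟩
  have h0 : u j * s + ∑ i ∈ Finset.univ.erase j, u i * x i = 0 := by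
    have hsplit := Finset.add_sum_erase Finset.univ (fun i => u i * x i) (Finset.mem_univ j)
    simp only at hsplit
    rw [hxj] at hsplit
    rw [hsplit, ← inner_sum']
    exact hx2
  have heq : |u j| = |∑ i ∈ Finset.univ.erase j, u i * x i| := by
    have : ∑ i ∈ Finset.univ.erase j, u i * x i = -(u j * s) := by linarith
    rw [this, abs_neg, abs_mul, hs, mul_one]
  have hle : |∑ i ∈ Finset.univ.erase j, u i * x i| ≤ ∑ i ∈ Finset.univ.erase j, |u i| := by
    calc |∑ i ∈ Finset.univ.erase j, u i * x i| ≤ ∑ i ∈ Finset.univ.erase j, |u i * x i| :=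
          Finset.abs_sum_le_sum_abs _ _
      _ ≤ ∑ i ∈ Finset.univ.erase j, |u i| := by
          refine Finset.sum_le_sum fun i _ => ?_
          rw [abs_mul]
          exact mul_le_of_le_one_right (abs_nonneg _) (hx1 i)
  linarith

private lemma combEquiv_image {a b : ℕ}
    (T : EuclideanSpace ℝ (Fin a) →ₗ[ℝ] EuclideanSpace ℝ (Fin b))
    (hT : Function.Injective T) (P : Set (EuclideanSpace ℝ (Fin a))) :
    CombEquiv (T '' P) P := by
  obtain ⟨g, hg⟩ := T.exists_leftInverse_of_injective (LinearMap.ker_eq_bot.2 hT)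
  have hgT : ∀ p, g (T p) = p := fun p => LinearMap.congr_fun hg p
  have expPre : ∀ G : Set (EuclideanSpace ℝ (Fin b)),
      IsExposed ℝ (T '' P) G → IsExposed ℝ P (T ⁻¹' G ∩ P) := by
    intro G hG hne
    obtain ⟨p, hpG, hpP⟩ := hne
    obtain ⟨m, hm⟩ := hG ⟨T p, hpG⟩
    refine ⟨m.comp (LinearMap.toContinuousLinearMap T), ?_⟩
    ext q
    simp only [Set.mem_inter_iff, Set.mem_preimage, Set.mem_sep_iff,
      ContinuousLinearMap.comp_apply, LinearMap.coe_toContinuousLinearMap']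
    constructor
    · rintro ⟨hqG, hqP⟩
      rw [hm] at hqG
      exact ⟨hqP, fun y hy => hqG.2 (T y) ⟨y, hy, rfl⟩⟩
    · rintro ⟨hqP, hq⟩
      refine ⟨?_, hqP⟩
      rw [hm]
      exact ⟨⟨q, hqP, rfl⟩, by rintro y ⟨z, hz, rfl⟩; exact hq z hz⟩
  have expIm : ∀ B : Set (EuclideanSpace ℝ (Fin a)),
      IsExposed ℝ P B → IsExposed ℝ (T '' P) (T '' B) := by
    intro B hB hne
    obtain ⟨x, q, hqB, rfl⟩ := hne
    obtain ⟨l, hl⟩ := hB ⟨q, hqB⟩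
    refine ⟨l.comp (LinearMap.toContinuousLinearMap g), ?_⟩
    ext x
    simp only [Set.mem_sep_iff, ContinuousLinearMap.comp_apply,
      LinearMap.coe_toContinuousLinearMap']
    constructor
    · rintro ⟨p, hpB, rfl⟩
      have hpP : p ∈ P := hB.subset hpB
      refine ⟨⟨p, hpP, rfl⟩, ?_⟩
      rintro y ⟨z, hzP, rfl⟩
      rw [hgT, hgT]
      rw [hl] at hpB
      exact hpB.2 z hzP
    · rintro ⟨⟨p, hpP, rfl⟩, hx⟩
      refine ⟨p, ?_, rfl⟩
      rw [hl]
      refine ⟨hpP, fun z hzP => ?_⟩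
      have := hx (T z) ⟨z, hzP, rfl⟩
      rwa [hgT, hgT] at this
  refine ⟨{
    toFun := fun G => ⟨T ⁻¹' G.1 ∩ P, expPre G.1 G.2⟩
    invFun := fun B => ⟨T '' B.1, expIm B.1 B.2⟩
    left_inv := fun G => by
      apply Subtype.ext
      show T '' (T ⁻¹' G.1 ∩ P) = G.1
      rw [Set.image_preimage_inter]
      exact Set.inter_eq_left.2 G.2.subset
    right_inv := fun B => by
      apply Subtype.ext
      show T ⁻¹' (T '' B.1) ∩ P = B.1
      rw [Set.preimage_image_eq _ hT]
      exact Set.inter_eq_left.2 B.2.subset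
    map_rel_iff' := ?_ }⟩
  intro G G'
  show T ⁻¹' G.1 ∩ P ⊆ T ⁻¹' G'.1 ∩ P ↔ G.1 ⊆ G'.1
  constructor
  · intro h x hx
    obtain ⟨p, hpP, rfl⟩ := G.2.subset hx
    exact (h ⟨hx, hpP⟩).1
  · intro h x hx
    exact ⟨h hx.1, hx.2⟩

private def sliceMap {n : ℕ} (u : EuclideanSpace ℝ (Fin (n + 1))) (j : Fin (n + 1)) :
    EuclideanSpace ℝ (Fin n) →ₗ[ℝ] EuclideanSpace ℝ (Fin (n + 1)) where
  toFun y := WithLp.toLp 2 fun i =>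
    (finSuccEquiv' j i).elim (-(∑ k, u (j.succAbove k) * y k) / u j) y
  map_add' y z := by
    ext i
    show (finSuccEquiv' j i).elim _ _ = _
    cases h : finSuccEquiv' j i with
    | none =>
        simp only [h, Option.elim, PiLp.add_apply]
        have hsum : ∑ k, u (j.succAbove k) * (y k + z k) =
            (∑ k, u (j.succAbove k) * y k) + ∑ k, u (j.succAbove k) * z k := by
          rw [← Finset.sum_add_distrib]
          exact Finset.sum_congr rfl fun k _ => by ring
        rw [hsum]
        ring
    | some k =>
        simp [h, Option.elim]
  map_smul' r y := by
    ext i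
    show (finSuccEquiv' j i).elim _ _ = _
    cases h : finSuccEquiv' j i with
    | none =>
        simp only [h, Option.elim, PiLp.smul_apply, smul_eq_mul, RingHom.id_apply]
        have hsum : ∑ k, u (j.succAbove k) * (r * y k) =
            r * ∑ k, u (j.succAbove k) * y k := by
          rw [Finset.mul_sum]
          exact Finset.sum_congr rfl fun k _ => by ring
        rw [hsum]
        ring
    | some k =>
        simp [h, Option.elim]

private lemma sliceMap_apply_succAbove {n : ℕ} (u : EuclideanSpace ℝ (Fin (n + 1)))
    (j : Fin (n + 1)) (y : EuclideanSpace ℝ (Fin n)) (k : Fin n) :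
    sliceMap u j y (j.succAbove k) = y k := by
  show (finSuccEquiv' j (j.succAbove k)).elim _ _ = _
  rw [finSuccEquiv'_succAbove]
  rfl

private lemma sliceMap_apply_self {n : ℕ} (u : EuclideanSpace ℝ (Fin (n + 1)))
    (j : Fin (n + 1)) (y : EuclideanSpace ℝ (Fin n)) :
    sliceMap u j y j = -(∑ k, u (j.succAbove k) * y k) / u j := by
  show (finSuccEquiv' j j).elim _ _ = _
  rw [finSuccEquiv'_at]
  rfl

private lemma sliceMap_injective {n : ℕ} (u : EuclideanSpace ℝ (Fin (n + 1)))
    (j : Fin (n + 1)) : Function.Injective (sliceMap u j) := by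
  intro y z h
  ext k
  have := congrFun (congrArg (fun w : EuclideanSpace ℝ (Fin (n + 1)) => (w : Fin (n + 1) → ℝ)) h)
    (j.succAbove k)
  simpa [sliceMap_apply_succAbove] using this

private lemma slice_eq_image {n : ℕ} (u : EuclideanSpace ℝ (Fin (n + 1))) (j : Fin (n + 1))
    (huj : u j ≠ 0) (h : ∑ k, |u (j.succAbove k)| ≤ |u j|) :
    cube (n + 1) ∩ {x | ⟪u, x⟫ = 0} = (sliceMap u j) '' cube n := by
  ext x
  constructor
  · rintro ⟨hx1, hx2⟩
    refine ⟨WithLp.toLp 2 fun k => x (j.succAbove k), fun k => hx1 _, ?_⟩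
    ext i
    rcases eq_or_ne i j with rfl | hij
    · rw [sliceMap_apply_self]
      have h0 : u i * x i + ∑ k, u (i.succAbove k) * x (i.succAbove k) = 0 := by
        rw [← Fin.sum_univ_succAbove (fun m => u m * x m) i, ← inner_sum']
        exact hx2
      field_simp
      linarith
    · obtain ⟨k, rfl⟩ := Fin.exists_succAbove_eq hij
      rw [sliceMap_apply_succAbove]
  · rintro ⟨y, hy, rfl⟩
    have habs : |∑ k, u (j.succAbove k) * y k| ≤ |u j| := by
      calc |∑ k, u (j.succAbove k) * y k| ≤ ∑ k, |u (j.succAbove k) * y k| :=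
            Finset.abs_sum_le_sum_abs _ _
        _ ≤ ∑ k, |u (j.succAbove k)| := by
            refine Finset.sum_le_sum fun k _ => ?_
            rw [abs_mul]
            exact mul_le_of_le_one_right (abs_nonneg _) (hy k)
        _ ≤ |u j| := h
    constructor
    · intro i
      rcases eq_or_ne i j with rfl | hij
      · rw [sliceMap_apply_self, abs_div, abs_neg]
        exact div_le_one_of_le₀ habs (abs_nonneg _)
      · obtain ⟨k, rfl⟩ := Fin.exists_succAbove_eq hij
        rw [sliceMap_apply_succAbove]
        exact hy k
    · show ⟪u, sliceMap u j y⟫ = 0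
      rw [inner_sum', Fin.sum_univ_succAbove (fun m => u m * sliceMap u j y m) j]
      simp only [sliceMap_apply_self, sliceMap_apply_succAbove]
      field_simp
      ring

/-- For any nonzero `u ∈ ℝ^d`, the hyperplane `u^⊥` either intersects all `2d` facets of the
cube `C_d`, or it intersects all facets except exactly one pair of parallel facets; in the
latter case the slice `C_d ∩ u^⊥` is combinatorially equivalent to the cube `C_{d-1}`. -/
theorem hyperplane_facets_dichotomy (d : ℕ) (u : EuclideanSpace ℝ (Fin d)) (hu : u ≠ 0) :
    (∀ j : Fin d, ∀ s ∈ ({1, -1} : Set ℝ),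
        (cubeFacet d j s ∩ {x | ⟪u, x⟫ = 0}).Nonempty) ∨
    (∃ j : Fin d,
        cubeFacet d j 1 ∩ {x | ⟪u, x⟫ = 0} = ∅ ∧
        cubeFacet d j (-1) ∩ {x | ⟪u, x⟫ = 0} = ∅ ∧
        (∀ j' : Fin d, j' ≠ j → ∀ s ∈ ({1, -1} : Set ℝ),
          (cubeFacet d j' s ∩ {x | ⟪u, x⟫ = 0}).Nonempty) ∧
        CombEquiv (cube d ∩ {x | ⟪u, x⟫ = 0}) (cube (d - 1))) := by
  have habs1 : ∀ s : ℝ, s ∈ ({1, -1} : Set ℝ) → |s| = 1 := by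
    intro s hs
    rcases hs with rfl | hs
    · exact abs_one
    · rw [Set.mem_singleton_iff] at hs; rw [hs]; norm_num
  by_cases H : ∀ j : Fin d, |u j| ≤ ∑ i ∈ Finset.univ.erase j, |u i|
  · exact Or.inl fun j s hs => facet_meets u hu j s (habs1 s hs) (H j)
  · right
    push_neg at H
    obtain ⟨j, hj⟩ := H
    refine ⟨j, facet_misses u j 1 abs_one hj, facet_misses u j (-1) (by norm_num) hj, ?_, ?_⟩
    · intro j' hj' s hs
      refine facet_meets u hu j' s (habs1 s hs) ?_
      have h1 : |u j'| ≤ ∑ i ∈ Finset.univ.erase j, |u i| :=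
        Finset.single_le_sum (f := fun i => |u i|) (fun i _ => abs_nonneg _)
          (Finset.mem_erase.2 ⟨hj', Finset.mem_univ j'⟩)
      have h2 : |u j| ≤ ∑ i ∈ Finset.univ.erase j', |u i| :=
        Finset.single_le_sum (f := fun i => |u i|) (fun i _ => abs_nonneg _)
          (Finset.mem_erase.2 ⟨Ne.symm hj', Finset.mem_univ j⟩)
      linarith
    · have hd : d ≠ 0 := fun h => (h ▸ j).elim0
      obtain ⟨n, rfl⟩ := Nat.exists_eq_succ_of_ne_zero hd
      have hkey : ∑ k, |u (j.succAbove k)| < |u j| := by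
        have h1 := Fin.sum_univ_succAbove (fun i => |u i|) j
        have h2 := Finset.add_sum_erase Finset.univ (fun i => |u i|) (Finset.mem_univ j)
        simp only at h1 h2
        linarith
      have huj : u j ≠ 0 := by
        intro h0
        rw [h0, abs_zero] at hkey
        exact absurd hkey (not_lt.2 (Finset.sum_nonneg fun k _ => abs_nonneg _))
      show CombEquiv (cube (n + 1) ∩ {x | ⟪u, x⟫ = 0}) (cube n)
      rw [slice_eq_image u j huj hkey.le]
      exact combEquiv_image _ (sliceMap_injective u j) _
end
end

section
/- For every d ≥ 2, there exists a vector u in R^d such that the hyperplane u^⊥ contains no vertex of the cube C_d and the slice C_d ∩ u^⊥ has exactly ⌈d/2⌉ · binom(d, ⌈d/2⌉) vertices; hence O'Neil's upper bound ⌈d/2⌉ · binom(d, ⌈d/2⌉) on the number of vertices of a (d-1)-dimensional slice of C_d is attained by a generic central slice in every dimension. -/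
open scoped RealInnerProductSpace

noncomputable section

namespace Oneil


variable (d : ℕ)

/-- integer weights: `w i = 3^d + 3^i`. -/
def wZ (i : Fin d) : ℤ := 3 ^ d + 3 ^ (i : ℕ)

def T (s : Finset (Fin d)) : ℤ := ∑ j, if j ∈ s then (3:ℤ) ^ (j:ℕ) else -3 ^ (j:ℕ)

def F (s : Finset (Fin d)) : ℤ := ∑ j, if j ∈ s then wZ d j else -wZ d j

variable {d}

lemma wZ_pos (i : Fin d) : 0 < wZ d i := by unfold wZ; positivity

lemma sum_pow_lt : ∑ j : Fin d, (3:ℤ) ^ (j:ℕ) < 3 ^ d := by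
  rw [Fin.sum_univ_eq_sum_range (fun k => (3:ℤ) ^ k)]
  have h := geom_sum_mul (3:ℤ) d
  have h2 : (0:ℤ) ≤ ∑ i ∈ Finset.range d, (3:ℤ) ^ i :=
    Finset.sum_nonneg fun i _ => by positivity
  nlinarith [h, h2]

lemma abs_T_lt (s : Finset (Fin d)) : |T d s| < 3 ^ d := by
  have h1 : |T d s| ≤ ∑ j : Fin d, (3:ℤ) ^ (j:ℕ) := by
    refine (Finset.abs_sum_le_sum_abs _ _).trans ?_
    apply Finset.sum_le_sum
    intro j _
    split_ifs <;> simp [abs_of_nonneg, abs_neg, le_refl] <;> positivity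
  exact lt_of_le_of_lt h1 sum_pow_lt

lemma T_ne_zero (hd : 0 < d) (s : Finset (Fin d)) : T d s ≠ 0 := by
  intro h0
  set i0 : Fin d := ⟨0, hd⟩ with hi0
  set f : Fin d → ℤ := fun j => if j ∈ s then (3:ℤ) ^ (j:ℕ) else -3 ^ (j:ℕ) with hf
  have hsplit : f i0 + ∑ j ∈ Finset.univ.erase i0, f j = T d s := by
    rw [T]; exact Finset.add_sum_erase _ f (Finset.mem_univ i0)
  have hdvd : (3:ℤ) ∣ ∑ j ∈ Finset.univ.erase i0, f j := by
    apply Finset.dvd_sum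
    intro j hj
    have hj0 : (j:ℕ) ≠ 0 := by
      intro h
      exact (Finset.mem_erase.mp hj).1 (by ext; simp [h, hi0])
    have h3 : (3:ℤ) ∣ 3 ^ (j:ℕ) := dvd_pow_self 3 hj0
    simp only [hf]
    split_ifs
    · exact h3
    · exact dvd_neg.mpr h3
  have hfi0 : f i0 = 1 ∨ f i0 = -1 := by
    simp only [hf, hi0]
    split_ifs <;> simp
  rw [h0] at hsplit
  obtain ⟨m, hm⟩ := hdvd
  rcases hfi0 with h | h <;> omega

lemma sum_sign (s : Finset (Fin d)) :
    ∑ j : Fin d, (if j ∈ s then (1:ℤ) else -1) = 2 * s.card - d := by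
  have h : ∀ j : Fin d, (if j ∈ s then (1:ℤ) else -1) = (if j ∈ s then (2:ℤ) else 0) - 1 := by
    intro j; split_ifs <;> ring
  rw [Finset.sum_congr rfl (fun j _ => h j), Finset.sum_sub_distrib]
  rw [Finset.sum_ite_mem, Finset.univ_inter]
  simp [Finset.sum_const, mul_comm]

lemma F_eq (s : Finset (Fin d)) : F d s = 3 ^ d * (2 * s.card - d) + T d s := by
  have h : ∀ j : Fin d, (if j ∈ s then wZ d j else -wZ d j)
      = 3 ^ d * (if j ∈ s then (1:ℤ) else -1) + (if j ∈ s then (3:ℤ) ^ (j:ℕ) else -3 ^ (j:ℕ)) := by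
    intro j; unfold wZ; split_ifs <;> ring
  rw [F, Finset.sum_congr rfl (fun j _ => h j), Finset.sum_add_distrib, ← Finset.mul_sum,
    sum_sign, T]

lemma F_pos (s : Finset (Fin d)) (h : d < 2 * s.card) : 0 < F d s := by
  rw [F_eq]
  have h1 := abs_lt.mp (abs_T_lt s)
  have h2 : (1:ℤ) ≤ 2 * (s.card:ℤ) - d := by push_cast; omega
  nlinarith [pow_pos (by norm_num : (0:ℤ) < 3) d]

lemma F_neg (s : Finset (Fin d)) (h : 2 * s.card < d) : F d s < 0 := by
  rw [F_eq]
  have h1 := abs_lt.mp (abs_T_lt s)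
  have h2 : 2 * (s.card:ℤ) - d ≤ -1 := by push_cast; omega
  nlinarith [pow_pos (by norm_num : (0:ℤ) < 3) d]

lemma F_eq_T (s : Finset (Fin d)) (h : 2 * s.card = d) : F d s = T d s := by
  rw [F_eq]
  have : 2 * (s.card:ℤ) - d = 0 := by push_cast; omega
  rw [this]; ring

lemma F_ne_zero (hd : 0 < d) (s : Finset (Fin d)) : F d s ≠ 0 := by
  rcases lt_trichotomy (2 * s.card) d with h | h | h
  · exact (F_neg s h).ne
  · rw [F_eq_T s h]; exact T_ne_zero hd s
  · exact (F_pos s h).ne'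

lemma F_erase (s : Finset (Fin d)) (i : Fin d) (hi : i ∈ s) :
    F d (s.erase i) = F d s - 2 * wZ d i := by
  have h : ∀ j : Fin d, (if j ∈ s then wZ d j else -wZ d j)
      - (if j ∈ s.erase i then wZ d j else -wZ d j) = if j = i then 2 * wZ d i else 0 := by
    intro j
    rcases eq_or_ne j i with rfl | hji
    · simp [Finset.mem_erase, hi]
      ring
    · rcases em (j ∈ s) with h | h <;>
        simp [Finset.mem_erase, hji, h]
  have h2 : F d s - F d (s.erase i) = 2 * wZ d i := by
    rw [F, F, ← Finset.sum_sub_distrib, Finset.sum_congr rfl (fun j _ => h j)]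
    simp [Finset.sum_ite_eq']
  omega

lemma T_compl (s : Finset (Fin d)) : T d sᶜ = -T d s := by
  rw [T, T, ← Finset.sum_neg_distrib]
  apply Finset.sum_congr rfl
  intro j _
  rcases em (j ∈ s) with h | h <;> simp [h, Finset.mem_compl]




variable (d) in
/-- The index pairs `(i, s)` describing vertices of the slice. -/
def Pred (p : Fin d × Finset (Fin d)) : Prop :=
  p.1 ∈ p.2 ∧ 0 < F d p.2 ∧ F d (p.2.erase p.1) < 0

instance : DecidablePred (Pred d) := fun p => by unfold Pred; infer_instance

variable (d) in
def 𝒜 : Finset (Fin d × Finset (Fin d)) := Finset.univ.filter (Pred d)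

lemma key (i : Fin d) (s : Finset (Fin d)) (hi : i ∈ s) :
    Pred d (i, s) ↔
      (2 * s.card = d ∧ 0 < T d s) ∨ 2 * s.card = d + 1 ∨
      (2 * s.card = d + 2 ∧ T d (s.erase i) < 0) := by
  have hk : 1 ≤ s.card := Finset.card_pos.mpr ⟨i, hi⟩
  have hce : (s.erase i).card = s.card - 1 := Finset.card_erase_of_mem hi
  unfold Pred
  simp only [hi, true_and]
  rcases Nat.lt_or_ge (2 * s.card) d with h | h
  · have h1 := F_neg s h
    constructor
    · rintro ⟨h2, -⟩; omega
    · rintro (⟨h2, -⟩ | h2 | ⟨h2, -⟩) <;> omega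
  rcases eq_or_lt_of_le h with h0 | h
  · -- 2k = d
    have h1 := F_eq_T s h0.symm
    have h2 : F d (s.erase i) < 0 := F_neg _ (by omega)
    rw [h1]
    constructor
    · rintro ⟨ht, -⟩; exact Or.inl ⟨h0.symm, ht⟩
    · rintro (⟨-, ht⟩ | h2 | ⟨h2, -⟩)
      · exact ⟨ht, h2⟩
      · omega
      · omega
  rcases Nat.eq_or_lt_of_le h with h0 | h
  · -- 2k = d+1
    have h1 := F_pos s (by omega)
    have h2 : F d (s.erase i) < 0 := F_neg _ (by omega)
    constructor
    · intro; right; left; omega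
    · intro; exact ⟨h1, h2⟩
  rcases Nat.eq_or_lt_of_le h with h0 | h
  · -- 2k = d+2
    have h1 := F_pos s (by omega)
    have h2 := F_eq_T (s.erase i) (by omega)
    rw [h2]
    constructor
    · rintro ⟨-, ht⟩; exact Or.inr (Or.inr ⟨by omega, ht⟩)
    · rintro (⟨h3, -⟩ | h3 | ⟨-, ht⟩)
      · omega
      · omega
      · exact ⟨h1, ht⟩
  · -- 2k > d+2
    have h2 : 0 < F d (s.erase i) := F_pos _ (by omega)
    constructor
    · rintro ⟨-, h3⟩; omega
    · rintro (⟨h3, -⟩ | h3 | ⟨h3, -⟩) <;> omega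

lemma card_filter_prod (P : Fin d × Finset (Fin d) → Prop) [DecidablePred P] :
    (Finset.univ.filter P).card
      = ∑ s : Finset (Fin d), (Finset.univ.filter fun i => P (i, s)).card := by
  simp only [Finset.card_filter]
  rw [Fintype.sum_prod_type, Finset.sum_comm]

lemma card_sets (m : ℕ) :
    (Finset.univ.filter fun s : Finset (Fin d) => s.card = m).card = Nat.choose d m := by
  have h1 : (Finset.univ.filter fun s : Finset (Fin d) => s.card = m)
      = Finset.powersetCard m Finset.univ := by
    rw [Finset.powersetCard_eq_filter, Finset.powerset_univ]
  rw [h1, Finset.card_powersetCard, Finset.card_univ, Fintype.card_fin]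

lemma fiber_card (Q : Finset (Fin d) → Prop) [DecidablePred Q] (s : Finset (Fin d)) :
    (Finset.univ.filter fun i : Fin d => i ∈ s ∧ Q s).card = if Q s then s.card else 0 := by
  by_cases h : Q s
  · simp [h, Finset.filter_univ_mem]
  · simp [h]

lemma main_count (hd : 0 < d) :
    (𝒜 d).card = ((d + 1) / 2) * Nat.choose d ((d + 1) / 2) := by
  classical
  -- split into three pieces
  set P1 : Fin d × Finset (Fin d) → Prop :=
    fun p => p.1 ∈ p.2 ∧ (2 * p.2.card = d ∧ 0 < T d p.2) with hP1
  set P2 : Fin d × Finset (Fin d) → Prop :=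
    fun p => p.1 ∈ p.2 ∧ 2 * p.2.card = d + 1 with hP2
  set P3 : Fin d × Finset (Fin d) → Prop :=
    fun p => p.1 ∈ p.2 ∧ (2 * p.2.card = d + 2 ∧ T d (p.2.erase p.1) < 0) with hP3
  have hsplit : (𝒜 d).card = (Finset.univ.filter P1).card + (Finset.univ.filter P2).card
      + (Finset.univ.filter P3).card := by
    unfold 𝒜
    simp only [Finset.card_filter]
    rw [← Finset.sum_add_distrib, ← Finset.sum_add_distrib]
    apply Finset.sum_congr rfl
    rintro ⟨i, s⟩ -
    by_cases hi : i ∈ s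
    · have hk := key i s hi
      by_cases hp : Pred d (i, s)
      · rw [if_pos hp]
        rcases hk.mp hp with h | h | h
        · have y1 : P1 (i, s) := ⟨hi, h⟩
          have n2 : ¬ P2 (i, s) := by simp only [hP2]; rintro ⟨-, h2⟩; omega
          have n3 : ¬ P3 (i, s) := by simp only [hP3]; rintro ⟨-, h2, -⟩; omega
          rw [if_pos y1, if_neg n2, if_neg n3]
        · have y2 : P2 (i, s) := ⟨hi, h⟩
          have n1 : ¬ P1 (i, s) := by simp only [hP1]; rintro ⟨-, h2, -⟩; omega
          have n3 : ¬ P3 (i, s) := by simp only [hP3]; rintro ⟨-, h2, -⟩; omega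
          rw [if_pos y2, if_neg n1, if_neg n3]
        · have y3 : P3 (i, s) := ⟨hi, h⟩
          have n1 : ¬ P1 (i, s) := by simp only [hP1]; rintro ⟨-, h2, -⟩; omega
          have n2 : ¬ P2 (i, s) := by simp only [hP2]; rintro ⟨-, h2⟩; omega
          rw [if_pos y3, if_neg n1, if_neg n2]
      · rw [if_neg hp]
        have n1 : ¬ P1 (i, s) := fun h => hp ((key i s hi).mpr (Or.inl h.2))
        have n2 : ¬ P2 (i, s) := fun h => hp ((key i s hi).mpr (Or.inr (Or.inl h.2)))
        have n3 : ¬ P3 (i, s) := fun h => hp ((key i s hi).mpr (Or.inr (Or.inr h.2)))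
        rw [if_neg n1, if_neg n2, if_neg n3]
    · have h0 : ¬ Pred d (i, s) := fun h => hi h.1
      simp [h0, hi, hP1, hP2, hP3]
  -- piece P1
  have hc1 : (Finset.univ.filter P1).card
      = (d / 2) * (Finset.univ.filter fun s : Finset (Fin d) =>
          2 * s.card = d ∧ 0 < T d s).card := by
    rw [card_filter_prod]
    have h1 : ∀ s : Finset (Fin d),
        (Finset.univ.filter fun i => P1 (i, s)).card
          = if (2 * s.card = d ∧ 0 < T d s) then s.card else 0 :=
      fun s => fiber_card (fun s => 2 * s.card = d ∧ 0 < T d s) s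
    rw [Finset.sum_congr rfl (fun s _ => h1 s)]
    have h2 : ∀ s : Finset (Fin d),
        (if (2 * s.card = d ∧ 0 < T d s) then s.card else 0)
          = if (2 * s.card = d ∧ 0 < T d s) then d / 2 else 0 := by
      intro s; split_ifs with h
      · omega
      · rfl
    rw [Finset.sum_congr rfl (fun s _ => h2 s), ← Finset.sum_filter,
      Finset.sum_const, smul_eq_mul, mul_comm]
  -- piece P2
  have hc2 : (Finset.univ.filter P2).card
      = ((d + 1) / 2) * (Finset.univ.filter fun s : Finset (Fin d) =>
          2 * s.card = d + 1).card := by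
    rw [card_filter_prod]
    have h1 : ∀ s : Finset (Fin d),
        (Finset.univ.filter fun i => P2 (i, s)).card
          = if (2 * s.card = d + 1) then s.card else 0 :=
      fun s => fiber_card (fun s => 2 * s.card = d + 1) s
    rw [Finset.sum_congr rfl (fun s _ => h1 s)]
    have h2 : ∀ s : Finset (Fin d),
        (if (2 * s.card = d + 1) then s.card else 0)
          = if (2 * s.card = d + 1) then (d + 1) / 2 else 0 := by
      intro s; split_ifs with h
      · omega
      · rfl
    rw [Finset.sum_congr rfl (fun s _ => h2 s), ← Finset.sum_filter,
      Finset.sum_const, smul_eq_mul, mul_comm]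
  -- piece P3 : bijection with "i ∉ t" pairs
  have hbij : (Finset.univ.filter P3).card
      = (Finset.univ.filter fun p : Fin d × Finset (Fin d) =>
          p.1 ∉ p.2 ∧ (2 * p.2.card = d ∧ T d p.2 < 0)).card := by
    refine Finset.card_bij' (fun p _ => (p.1, p.2.erase p.1))
      (fun q _ => (q.1, insert q.1 q.2)) ?hi ?hj ?left ?right
    case hi =>
      rintro ⟨i, s⟩ hp
      simp only [Finset.mem_filter, Finset.mem_univ, true_and, hP3] at hp ⊢
      obtain ⟨hi, hcard, hT⟩ := hp
      have hk : 1 ≤ s.card := Finset.card_pos.mpr ⟨i, hi⟩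
      refine ⟨Finset.notMem_erase i s, ?_, hT⟩
      rw [Finset.card_erase_of_mem hi]; omega
    case hj =>
      rintro ⟨i, t⟩ hq
      simp only [Finset.mem_filter, Finset.mem_univ, true_and, hP3] at hq ⊢
      obtain ⟨hi, hcard, hT⟩ := hq
      refine ⟨Finset.mem_insert_self i t, ?_, ?_⟩
      · rw [Finset.card_insert_of_notMem hi]; omega
      · rw [Finset.erase_insert hi]; exact hT
    case left =>
      rintro ⟨i, s⟩ hp
      simp only [Finset.mem_filter, Finset.mem_univ, true_and, hP3] at hp
      simp [Finset.insert_erase hp.1]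
    case right =>
      rintro ⟨i, t⟩ hq
      simp only [Finset.mem_filter, Finset.mem_univ, true_and, hP3] at hq
      simp [Finset.erase_insert hq.1]
  have hc3 : (Finset.univ.filter P3).card
      = (d / 2) * (Finset.univ.filter fun s : Finset (Fin d) =>
          2 * s.card = d ∧ T d s < 0).card := by
    rw [hbij, card_filter_prod]
    have h1 : ∀ t : Finset (Fin d),
        (Finset.univ.filter fun i : Fin d => i ∉ t ∧ (2 * t.card = d ∧ T d t < 0)).card
          = if (2 * t.card = d ∧ T d t < 0) then d / 2 else 0 := by
      intro t
      by_cases h : 2 * t.card = d ∧ T d t < 0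
      · rw [if_pos h]
        have : (Finset.univ.filter fun i : Fin d => i ∉ t ∧ (2 * t.card = d ∧ T d t < 0)) = tᶜ := by
          ext i; simp [h, Finset.mem_compl]
        rw [this, Finset.card_compl, Fintype.card_fin]
        omega
      · rw [if_neg h]
        have : (Finset.univ.filter fun i : Fin d => i ∉ t ∧ (2 * t.card = d ∧ T d t < 0)) = ∅ := by
          ext i; simp only [Finset.mem_filter, Finset.mem_univ, true_and, Finset.notMem_empty,
            iff_false]
          rintro ⟨-, h2⟩; exact h h2
        rw [this, Finset.card_empty]
    rw [Finset.sum_congr rfl (fun t _ => h1 t), ← Finset.sum_filter,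
      Finset.sum_const, smul_eq_mul, mul_comm]
  rcases Nat.even_or_odd d with he | ho
  · -- d even
    obtain ⟨m, hm⟩ := he
    have h2 : (Finset.univ.filter fun s : Finset (Fin d) => 2 * s.card = d + 1).card = 0 := by
      rw [Finset.card_eq_zero]
      apply Finset.filter_false_of_mem
      intro s _
      omega
    have hunion : (Finset.univ.filter fun s : Finset (Fin d) => 2 * s.card = d ∧ 0 < T d s).card
        + (Finset.univ.filter fun s : Finset (Fin d) => 2 * s.card = d ∧ T d s < 0).card
        = Nat.choose d (d / 2) := by
      rw [← card_sets (d := d) (d / 2)]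
      rw [← Finset.card_union_of_disjoint]
      · congr 1
        ext s
        simp only [Finset.mem_union, Finset.mem_filter, Finset.mem_univ, true_and]
        constructor
        · rintro (⟨h, -⟩ | ⟨h, -⟩) <;> omega
        · intro h
          rcases lt_trichotomy (T d s) 0 with ht | ht | ht
          · right; exact ⟨by omega, ht⟩
          · exact absurd ht (T_ne_zero hd s)
          · left; exact ⟨by omega, ht⟩
      · rw [Finset.disjoint_filter]
        rintro s - ⟨-, h1⟩ ⟨-, h2⟩
        omega
    have hhalf : (d + 1) / 2 = d / 2 := by omega
    rw [hsplit, hc1, hc2, hc3, h2, hhalf, mul_zero, add_zero, ← Nat.mul_add, hunion]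
  · -- d odd
    obtain ⟨m, hm⟩ := ho
    have h1 : (Finset.univ.filter fun s : Finset (Fin d) =>
        2 * s.card = d ∧ 0 < T d s).card = 0 := by
      rw [Finset.card_eq_zero]
      apply Finset.filter_false_of_mem
      rintro s - ⟨h, -⟩
      omega
    have h3 : (Finset.univ.filter fun s : Finset (Fin d) =>
        2 * s.card = d ∧ T d s < 0).card = 0 := by
      rw [Finset.card_eq_zero]
      apply Finset.filter_false_of_mem
      rintro s - ⟨h, -⟩
      omega
    have h2 : (Finset.univ.filter fun s : Finset (Fin d) => 2 * s.card = d + 1)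
        = Finset.univ.filter fun s : Finset (Fin d) => s.card = (d + 1) / 2 := by
      ext s
      simp only [Finset.mem_filter, Finset.mem_univ, true_and]
      omega
    rw [hsplit, hc1, hc2, hc3, h1, h2, h3, card_sets]
    ring




variable (d) in
def uu : EuclideanSpace ℝ (Fin d) := WithLp.toLp 2 fun i => ((wZ d i : ℝ))

lemma uuR_pos (i : Fin d) : (0:ℝ) < (wZ d i : ℝ) := by exact_mod_cast wZ_pos i

lemma inner_uu (x : EuclideanSpace ℝ (Fin d)) : ⟪uu d, x⟫ = ∑ i, (wZ d i : ℝ) * x i := by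
  simp [uu, PiLp.inner_apply, RCLike.inner_apply, mul_comm]

/-- the coordinate bound -/
lemma coord_le_norm (x : EuclideanSpace ℝ (Fin d)) (i : Fin d) : |x i| ≤ ‖x‖ := by
  have h := EuclideanSpace.norm_eq x
  have h2 : (x i)^2 ≤ ∑ j, (x j)^2 :=
    Finset.single_le_sum (f := fun j => (x j)^2) (fun j _ => sq_nonneg _) (Finset.mem_univ i)
  calc |x i| = Real.sqrt ((x i)^2) := (Real.sqrt_sq_eq_abs _).symm
    _ ≤ Real.sqrt (∑ j, (x j)^2) := Real.sqrt_le_sqrt h2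
    _ = ‖x‖ := by rw [h]; simp [sq_abs]

/-- the inner product with a cube vertex, as an integer `F`. -/
lemma inner_vertex (v : EuclideanSpace ℝ (Fin d)) (hv : v ∈ cubeVertices d) :
    ⟪uu d, v⟫ = ((F d (Finset.univ.filter fun i => v i = 1) : ℤ) : ℝ) := by
  set s : Finset (Fin d) := Finset.univ.filter (fun i => v i = 1) with hs
  have hvi : ∀ i, v i = if i ∈ s then (1:ℝ) else -1 := by
    intro i
    rcases hv i with h | h
    · simp [hs, h]
    · have hns : i ∉ s := by
        simp only [hs, Finset.mem_filter, Finset.mem_univ, true_and, h]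
        norm_num
      simp [hns, h]
  rw [inner_uu]
  have h1 : ∑ i, (wZ d i : ℝ) * v i = ∑ i, (((if i ∈ s then wZ d i else -wZ d i) : ℤ) : ℝ) := by
    apply Finset.sum_congr rfl
    intro i _
    rw [hvi i]; split_ifs <;> push_cast <;> ring
  rw [h1, ← Int.cast_sum]
  rfl

lemma generic (hd : 0 < d) : ∀ v ∈ cubeVertices d, ⟪uu d, v⟫ ≠ 0 := by
  intro v hv
  rw [inner_vertex v hv]
  exact_mod_cast F_ne_zero hd _

variable (d) in
/-- the candidate vertex of the slice attached to a pair `(i, s)`. -/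
def φ (p : Fin d × Finset (Fin d)) : EuclideanSpace ℝ (Fin d) :=
  WithLp.toLp 2 fun j => if j = p.1 then 1 - (F d p.2 : ℝ) / (wZ d p.1 : ℝ) else if j ∈ p.2 then 1 else -1

lemma sum_erase_eq (i : Fin d) (s : Finset (Fin d)) (hi : i ∈ s) :
    ∑ j ∈ Finset.univ.erase i, (((if j ∈ s then wZ d j else -wZ d j) : ℤ) : ℝ)
      = (F d s : ℝ) - (wZ d i : ℝ) := by
  have h := Finset.add_sum_erase Finset.univ
    (fun j => if j ∈ s then wZ d j else -wZ d j) (Finset.mem_univ i)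
  simp only [if_pos hi] at h
  have h2 : ∑ j ∈ Finset.univ.erase i, (if j ∈ s then wZ d j else -wZ d j)
      = F d s - wZ d i := by rw [F] at *; omega
  rw [← Int.cast_sum, h2]
  push_cast
  ring

lemma inner_phi (i : Fin d) (s : Finset (Fin d)) (hi : i ∈ s) :
    ⟪uu d, φ d (i, s)⟫ = 0 := by
  rw [inner_uu, ← Finset.add_sum_erase _ _ (Finset.mem_univ i)]
  have h1 : (wZ d i : ℝ) * φ d (i, s) i = (wZ d i : ℝ) - F d s := by
    simp only [φ, PiLp.toLp_apply, if_true]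
    have hw : ((wZ d i : ℝ)) ≠ 0 := (uuR_pos i).ne'
    field_simp
  have h2 : ∑ j ∈ Finset.univ.erase i, (wZ d j : ℝ) * φ d (i, s) j
      = (F d s : ℝ) - wZ d i := by
    rw [← sum_erase_eq i s hi]
    apply Finset.sum_congr rfl
    intro j hj
    have hji : j ≠ i := (Finset.mem_erase.mp hj).1
    simp only [φ, PiLp.toLp_apply, if_neg hji]
    split_ifs <;> push_cast <;> ring
  rw [h1, h2]
  ring

lemma phi_center_bound (i : Fin d) (s : Finset (Fin d)) (hp : Pred d (i, s)) :
    |1 - (F d s : ℝ) / (wZ d i : ℝ)| < 1 := by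
  obtain ⟨hi, hF, hFe⟩ := hp
  rw [F_erase s i hi] at hFe
  have hw := uuR_pos (d := d) i
  have h1 : (0:ℝ) < (F d s : ℝ) := by exact_mod_cast hF
  have h2 : (F d s : ℝ) < 2 * (wZ d i : ℝ) := by
    have : F d s < 2 * wZ d i := by omega
    exact_mod_cast this
  rw [abs_lt]
  constructor
  · rw [neg_lt, neg_sub]
    calc (F d s : ℝ) / (wZ d i : ℝ) - 1 < 2 - 1 := by
          have := (div_lt_iff₀ hw).mpr (by linarith : (F d s : ℝ) < 2 * (wZ d i : ℝ))
          linarith [this]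
      _ = 1 := by norm_num
  · have := div_pos h1 hw
    linarith

lemma phi_mem (i : Fin d) (s : Finset (Fin d)) (hp : Pred d (i, s)) :
    φ d (i, s) ∈ cube d ∩ {x | ⟪uu d, x⟫ = 0} := by
  constructor
  · intro j
    simp only [φ, PiLp.toLp_apply]
    split_ifs with h1 h2
    · exact le_of_lt (phi_center_bound i s hp)
    · norm_num
    · norm_num
  · exact inner_phi i s hp.1


lemma eq_of_convex_one {a b p q : ℝ} (ha : 0 < a) (hb : 0 < b) (hab : a + b = 1)
    (hp : |p| ≤ 1) (hq : |q| ≤ 1) (h : a * p + b * q = 1) : p = 1 ∧ q = 1 := by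
  rw [abs_le] at hp hq
  constructor <;> nlinarith

lemma eq_of_convex_negone {a b p q : ℝ} (ha : 0 < a) (hb : 0 < b) (hab : a + b = 1)
    (hp : |p| ≤ 1) (hq : |q| ≤ 1) (h : a * p + b * q = -1) : p = -1 ∧ q = -1 := by
  rw [abs_le] at hp hq
  constructor <;> nlinarith

lemma phi_extreme (p : Fin d × Finset (Fin d)) (hp : p ∈ 𝒜 d) :
    φ d p ∈ Set.extremePoints ℝ (cube d ∩ {x | ⟪uu d, x⟫ = 0}) := by
  obtain ⟨i, s⟩ := p
  have hpred : Pred d (i, s) := (Finset.mem_filter.mp hp).2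
  refine ⟨phi_mem i s hpred, ?_⟩
  rintro y hy z hz ⟨a, b, ha, hb, hab, hsum⟩
  have happ : ∀ j, a * y j + b * z j = φ d (i, s) j := by
    intro j
    have := congrArg (fun v => v j) hsum
    simpa [PiLp.add_apply, PiLp.smul_apply, smul_eq_mul] using this
  have hcoord : ∀ j, j ≠ i → y j = φ d (i, s) j ∧ z j = φ d (i, s) j := by
    intro j hj
    have hxj : φ d (i, s) j = 1 ∨ φ d (i, s) j = -1 := by
      simp only [φ, PiLp.toLp_apply, if_neg hj]
      split_ifs
      · left; rfl
      · right; rfl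
    rcases hxj with h | h
    · obtain ⟨h1, h2⟩ := eq_of_convex_one ha hb hab (hy.1 j) (hz.1 j) (by rw [happ j, h])
      rw [h, h1, h2]; exact ⟨rfl, rfl⟩
    · obtain ⟨h1, h2⟩ := eq_of_convex_negone ha hb hab (hy.1 j) (hz.1 j) (by rw [happ j, h])
      rw [h, h1, h2]; exact ⟨rfl, rfl⟩
  have hyz : y = z := by
    have hy0 : ⟪uu d, y⟫ = 0 := hy.2
    have hz0 : ⟪uu d, z⟫ = 0 := hz.2
    rw [inner_uu] at hy0 hz0
    have hsub : ∑ j, (wZ d j : ℝ) * (y j - z j) = 0 := by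
      have : ∑ j, (wZ d j : ℝ) * (y j - z j)
          = ∑ j, (wZ d j : ℝ) * y j - ∑ j, (wZ d j : ℝ) * z j := by
        rw [← Finset.sum_sub_distrib]
        apply Finset.sum_congr rfl
        intro j _; ring
      rw [this, hy0, hz0, sub_zero]
    have hsingle : ∑ j, (wZ d j : ℝ) * (y j - z j) = (wZ d i : ℝ) * (y i - z i) := by
      apply Finset.sum_eq_single i
      · intro j _ hj
        have h := hcoord j hj
        rw [h.1, h.2]; ring
      · intro h; exact absurd (Finset.mem_univ i) h
    rw [hsingle] at hsub
    have hyi : y i = z i := by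
      have hw : ((wZ d i : ℝ)) ≠ 0 := (uuR_pos i).ne'
      have := mul_eq_zero.mp hsub
      rcases this with h | h
      · exact absurd h hw
      · linarith
    refine PiLp.ext fun j => ?_
    by_cases hj : j = i
    · rw [hj]; exact hyi
    · rw [(hcoord j hj).1, (hcoord j hj).2]
  have hyx : y = φ d (i, s) := by
    rw [← hsum, hyz, ← add_smul, hab, one_smul]
  exact hyx

lemma extreme_subset (hd : 2 ≤ d) :
    Set.extremePoints ℝ (cube d ∩ {x | ⟪uu d, x⟫ = 0}) ⊆ (φ d) '' ↑(𝒜 d) := by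
  intro x hx
  obtain ⟨⟨hxc, hx0⟩, hext⟩ := hx
  have hd0 : 0 < d := by omega
  -- step 1: all coordinates but at most one are ±1
  have habs : ∀ j, x j ≠ 1 → x j ≠ -1 → |x j| < 1 := by
    intro j h1 h2
    rcases lt_or_eq_of_le (hxc j) with h | h
    · exact h
    · rcases (abs_eq (by norm_num : (0:ℝ) ≤ 1)).mp h with h | h
      · exact absurd h h1
      · exact absurd h h2
  have step1 : ∃ i : Fin d, ∀ j, j ≠ i → x j = 1 ∨ x j = -1 := by
    by_contra hcon
    push_neg at hcon
    obtain ⟨j₀, hj₀ne, hj₀a, hj₀b⟩ := hcon ⟨0, hd0⟩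
    obtain ⟨j₁, hj₁ne, hj₁a, hj₁b⟩ := hcon j₀
    have hb₀ : |x j₀| < 1 := habs j₀ hj₀a hj₀b
    have hb₁ : |x j₁| < 1 := habs j₁ hj₁a hj₁b
    have hw₀ := uuR_pos (d := d) j₀
    have hw₁ := uuR_pos (d := d) j₁
    set δ : ℝ := min ((1 - |x j₀|) / (wZ d j₁ : ℝ)) ((1 - |x j₁|) / (wZ d j₀ : ℝ)) with hδ
    have hδpos : 0 < δ := lt_min (div_pos (by linarith) hw₁) (div_pos (by linarith) hw₀)
    set w : EuclideanSpace ℝ (Fin d) := WithLp.toLp 2 fun j =>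
      (if j = j₀ then δ * (wZ d j₁ : ℝ) else 0) - (if j = j₁ then δ * (wZ d j₀ : ℝ) else 0)
      with hw
    have hwj₀ : w j₀ = δ * (wZ d j₁ : ℝ) := by simp [hw, hj₁ne.symm]
    have hwj₁ : w j₁ = -(δ * (wZ d j₀ : ℝ)) := by simp [hw, hj₁ne]
    have hwother : ∀ j, j ≠ j₀ → j ≠ j₁ → w j = 0 := by
      intro j h0 h1; simp [hw, h0, h1]
    have hwbound : ∀ j, |w j| ≤ 1 - |x j| := by
      intro j
      by_cases h0 : j = j₀
      · subst h0
        rw [hwj₀, abs_of_pos (by positivity)]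
        calc δ * (wZ d j₁ : ℝ) ≤ ((1 - |x j|) / (wZ d j₁ : ℝ)) * (wZ d j₁ : ℝ) :=
              mul_le_mul_of_nonneg_right (min_le_left _ _) hw₁.le
          _ = 1 - |x j| := by field_simp
      by_cases h1 : j = j₁
      · subst h1
        rw [hwj₁, abs_neg, abs_of_pos (by positivity)]
        calc δ * (wZ d j₀ : ℝ) ≤ ((1 - |x j|) / (wZ d j₀ : ℝ)) * (wZ d j₀ : ℝ) :=
              mul_le_mul_of_nonneg_right (min_le_right _ _) hw₀.le
          _ = 1 - |x j| := by field_simp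
      · rw [hwother j h0 h1]
        simp only [abs_zero]
        linarith [hxc j]
    have hinnerw : ∑ j, (wZ d j : ℝ) * w j = 0 := by
      simp only [hw, mul_sub, mul_ite, mul_zero, Finset.sum_sub_distrib,
        Finset.sum_ite_eq', Finset.mem_univ, if_true]
      ring
    have hymem : x + w ∈ cube d ∩ {v | ⟪uu d, v⟫ = 0} := by
      constructor
      · intro j
        calc |(x + w) j| = |x j + w j| := rfl
          _ ≤ |x j| + |w j| := abs_add_le _ _
          _ ≤ 1 := by linarith [hwbound j]
      · show ⟪uu d, x + w⟫ = 0
        rw [inner_uu]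
        have : ∑ j, (wZ d j : ℝ) * (x + w) j
            = ∑ j, (wZ d j : ℝ) * x j + ∑ j, (wZ d j : ℝ) * w j := by
          rw [← Finset.sum_add_distrib]
          apply Finset.sum_congr rfl
          intro j _
          show (wZ d j : ℝ) * (x j + w j) = _
          ring
        rw [this, hinnerw, ← inner_uu, hx0, add_zero]
    have hzmem : x - w ∈ cube d ∩ {v | ⟪uu d, v⟫ = 0} := by
      constructor
      · intro j
        calc |(x - w) j| = |x j - w j| := rfl
          _ ≤ |x j| + |w j| := abs_sub _ _
          _ ≤ 1 := by linarith [hwbound j]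
      · show ⟪uu d, x - w⟫ = 0
        rw [inner_uu]
        have : ∑ j, (wZ d j : ℝ) * (x - w) j
            = ∑ j, (wZ d j : ℝ) * x j - ∑ j, (wZ d j : ℝ) * w j := by
          rw [← Finset.sum_sub_distrib]
          apply Finset.sum_congr rfl
          intro j _
          show (wZ d j : ℝ) * (x j - w j) = _
          ring
        rw [this, hinnerw, ← inner_uu, hx0, sub_zero]
    have hseg : x ∈ openSegment ℝ (x + w) (x - w) := by
      refine ⟨1/2, 1/2, by norm_num, by norm_num, by norm_num, ?_⟩
      refine PiLp.ext fun j => ?_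
      show (1/2 : ℝ) * ((x + w) j) + (1/2 : ℝ) * ((x - w) j) = x j
      show (1/2 : ℝ) * (x j + w j) + (1/2 : ℝ) * (x j - w j) = x j
      ring
    have := hext hymem hzmem hseg
    have h0 := congrArg (fun v => v j₀) this
    have : x j₀ + w j₀ = x j₀ := h0
    rw [hwj₀] at this
    nlinarith
  -- step 2: construct the pair (i, s)
  obtain ⟨i, hi⟩ := step1
  set s : Finset (Fin d) := insert i (Finset.univ.filter fun j => x j = 1) with hs
  have his : i ∈ s := Finset.mem_insert_self _ _
  have hxj : ∀ j, j ≠ i → x j = if j ∈ s then (1:ℝ) else -1 := by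
    intro j hj
    have hmem : j ∈ s ↔ x j = 1 := by
      simp [hs, Finset.mem_insert, hj]
    rcases hi j hj with h | h
    · rw [if_pos (hmem.mpr h), h]
    · rw [if_neg, h]
      intro hm
      rw [hmem.mp hm] at h
      norm_num at h
  have hw : ((wZ d i : ℝ)) ≠ 0 := (uuR_pos i).ne'
  have hxi : (wZ d i : ℝ) * x i = (wZ d i : ℝ) - (F d s : ℝ) := by
    have h0 : ∑ j, (wZ d j : ℝ) * x j = 0 := by rw [← inner_uu]; exact hx0
    rw [← Finset.add_sum_erase _ _ (Finset.mem_univ i)] at h0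
    have h2 : ∑ j ∈ Finset.univ.erase i, (wZ d j : ℝ) * x j = (F d s : ℝ) - wZ d i := by
      rw [← sum_erase_eq i s his]
      apply Finset.sum_congr rfl
      intro j hj
      have hji := (Finset.mem_erase.mp hj).1
      rw [hxj j hji]
      split_ifs <;> push_cast <;> ring
    simp only [h2] at h0
    linarith
  have hxine : x i ≠ 1 ∧ x i ≠ -1 := by
    have hvert : (x i = 1 ∨ x i = -1) → False := by
      intro h
      apply generic hd0 x ?_ hx0
      intro j
      by_cases hj : j = i
      · rw [hj]; exact h
      · exact hi j hj
    constructor <;> intro h <;> exact hvert (by tauto)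
  have hxilt : |x i| < 1 := habs i hxine.1 hxine.2
  rw [abs_lt] at hxilt
  have hFpos : (0:ℝ) < (F d s : ℝ) := by nlinarith [uuR_pos (d := d) i]
  have hFlt : (F d s : ℝ) < 2 * (wZ d i : ℝ) := by nlinarith [uuR_pos (d := d) i]
  have hpred : Pred d (i, s) := by
    refine ⟨his, by exact_mod_cast hFpos, ?_⟩
    rw [F_erase s i his]
    have : (F d s : ℝ) < 2 * ((wZ d i : ℤ) : ℝ) := hFlt
    have h2 : F d s < 2 * wZ d i := by exact_mod_cast this
    omega
  have hphix : φ d (i, s) = x := by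
    refine PiLp.ext fun j => ?_
    by_cases hj : j = i
    · have hv : φ d (i, s) j = 1 - (F d s : ℝ) / (wZ d i : ℝ) := by
        simp [φ, hj]
      rw [hv, hj]
      field_simp
      linarith [hxi]
    · have hv : φ d (i, s) j = if j ∈ s then (1:ℝ) else -1 := by
        simp [φ, hj]
      rw [hv, (hxj j hj).symm]
  exact ⟨(i, s), by simp [𝒜, hpred], hphix⟩

lemma phi_injOn : Set.InjOn (φ d) ↑(𝒜 d) := by
  rintro ⟨i, s⟩ hp ⟨i', s'⟩ hq h
  simp only [Finset.mem_coe, 𝒜, Finset.mem_filter, Finset.mem_univ, true_and] at hp hq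
  have hii : i = i' := by
    by_contra hne
    have h1 := congrArg (fun v => v i') h
    have h2 : φ d (i, s) i' = 1 ∨ φ d (i, s) i' = -1 := by
      simp only [φ, PiLp.toLp_apply, if_neg (Ne.symm hne)]
      split_ifs
      · left; rfl
      · right; rfl
    have h3 : |φ d (i', s') i'| < 1 := by
      simp only [φ, PiLp.toLp_apply, if_pos rfl]
      exact phi_center_bound i' s' hq
    rw [h1] at h2
    rcases h2 with h2 | h2 <;> rw [h2] at h3 <;> norm_num at h3
  subst hii
  have hss : s = s' := by
    ext j
    by_cases hj : j = i
    · subst hj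
      simp [hp.1, hq.1]
    · have h1 := congrArg (fun v => v j) h
      simp only [φ, PiLp.toLp_apply, if_neg hj] at h1
      constructor <;> intro hm
      · rw [if_pos hm] at h1
        by_contra hm'
        rw [if_neg hm'] at h1
        norm_num at h1
      · rw [if_pos hm] at h1
        by_contra hm'
        rw [if_neg hm'] at h1
        norm_num at h1
  rw [hss]

lemma uu_ne_zero (hd : 0 < d) : uu d ≠ 0 := by
  intro h
  have h1 : uu d ⟨0, hd⟩ = (0 : EuclideanSpace ℝ (Fin d)) ⟨0, hd⟩ := congrArg (fun v => v ⟨0, hd⟩) h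
  have h2 : ((wZ d ⟨0, hd⟩ : ℝ)) = 0 := h1
  exact (uuR_pos _).ne' h2

lemma adim_slice (hd : 0 < d) : adim (cube d ∩ {x | ⟪uu d, x⟫ = 0}) = d - 1 := by
  set K : Submodule ℝ (EuclideanSpace ℝ (Fin d)) := (ℝ ∙ (uu d))ᗮ with hK
  have hmemK : ∀ x : EuclideanSpace ℝ (Fin d), x ∈ K ↔ ⟪uu d, x⟫ = 0 := by
    intro x
    rw [hK, Submodule.mem_orthogonal_singleton_iff_inner_left, real_inner_comm]
  have hzero : (0 : EuclideanSpace ℝ (Fin d)) ∈ cube d ∩ {x | ⟪uu d, x⟫ = 0} := by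
    constructor
    · intro i
      show |(0 : EuclideanSpace ℝ (Fin d)) i| ≤ 1
      norm_num
    · show ⟪uu d, (0 : EuclideanSpace ℝ (Fin d))⟫ = 0
      exact inner_zero_right _
  have hdir : (affineSpan ℝ (cube d ∩ {x | ⟪uu d, x⟫ = 0})).direction = K := by
    apply le_antisymm
    · rw [direction_affineSpan, vectorSpan_def, Submodule.span_le]
      rintro v ⟨a, ha, b, hb, rfl⟩
      rw [SetLike.mem_coe, hmemK]
      show ⟪uu d, a - b⟫ = 0
      rw [inner_sub_right, ha.2, hb.2, sub_zero]
    · intro v hv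
      rcases eq_or_ne v 0 with rfl | hv0
      · exact Submodule.zero_mem _
      have hnorm : ‖v‖ ≠ 0 := norm_ne_zero_iff.mpr hv0
      set p : EuclideanSpace ℝ (Fin d) := (‖v‖)⁻¹ • v with hp
      have hpP : p ∈ cube d ∩ {x | ⟪uu d, x⟫ = 0} := by
        constructor
        · intro i
          refine (coord_le_norm p i).trans ?_
          rw [hp, norm_smul, norm_inv, norm_norm, inv_mul_cancel₀ hnorm]
        · show ⟪uu d, p⟫ = 0
          rw [hp, real_inner_smul_right, (hmemK v).mp hv, mul_zero]
      have hpdir : p ∈ (affineSpan ℝ (cube d ∩ {x | ⟪uu d, x⟫ = 0})).direction := by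
        have h1 := AffineSubspace.vsub_mem_direction
          (subset_affineSpan ℝ _ hpP) (subset_affineSpan ℝ _ hzero)
        simpa using h1
      have hvp : v = ‖v‖ • p := by
        rw [hp, smul_smul, mul_inv_cancel₀ hnorm, one_smul]
      rw [hvp]
      exact Submodule.smul_mem _ _ hpdir
  rw [adim, hdir, hK]
  have h1 : Module.finrank ℝ (ℝ ∙ (uu d)) = 1 := finrank_span_singleton (uu_ne_zero hd)
  have h2 := Submodule.finrank_add_finrank_orthogonal (K := (ℝ ∙ (uu d)))
  rw [h1, finrank_euclideanSpace_fin] at h2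
  omega

theorem final (d : ℕ) (hd : 2 ≤ d) :
    ∃ u : EuclideanSpace ℝ (Fin d),
      (∀ v ∈ cubeVertices d, ⟪u, v⟫ ≠ 0) ∧
      adim (cube d ∩ {x | ⟪u, x⟫ = 0}) = d - 1 ∧
      (Set.extremePoints ℝ (cube d ∩ {x | ⟪u, x⟫ = 0})).ncard
        = ((d + 1) / 2) * Nat.choose d ((d + 1) / 2) := by
  have hd0 : 0 < d := by omega
  refine ⟨uu d, generic hd0, adim_slice hd0, ?_⟩
  have himg : Set.extremePoints ℝ (cube d ∩ {x | ⟪uu d, x⟫ = 0}) = (φ d) '' ↑(𝒜 d) := by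
    apply subset_antisymm (extreme_subset hd)
    rintro y ⟨p, hp, rfl⟩
    exact phi_extreme p hp
  rw [himg, Set.ncard_image_of_injOn phi_injOn, Set.ncard_coe_finset, main_count hd0]


end Oneil

/-- For every `d ≥ 2` there is a vector `u ∈ ℝ^d` such that the hyperplane `u^⊥` contains no
vertex of the cube `C_d` and the slice `C_d ∩ u^⊥` is `(d-1)`-dimensional with exactly
`⌈d/2⌉ · choose d ⌈d/2⌉` vertices (extreme points). Hence O'Neil's upper bound on the number
of vertices of a `(d-1)`-dimensional slice of `C_d` is attained by a generic central slice. -/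
theorem oneil_bound_attained_by_generic_central_slice (d : ℕ) (hd : 2 ≤ d) :
    ∃ u : EuclideanSpace ℝ (Fin d),
      (∀ v ∈ cubeVertices d, ⟪u, v⟫ ≠ 0) ∧
      adim (cube d ∩ {x | ⟪u, x⟫ = 0}) = d - 1 ∧
      (Set.extremePoints ℝ (cube d ∩ {x | ⟪u, x⟫ = 0})).ncard
        = ((d + 1) / 2) * Nat.choose d ((d + 1) / 2) := by
  exact Oneil.final d hd
end
end

section
/- Let d be odd and let u = (1,1,...,1) in R^d. Then the hyperplane u^⊥ = {x : x_1 + ... + x_d = 0} contains no vertex of the cube C_d, and the polytope C_d ∩ u^⊥ has exactly d · binom(d-1, (d-1)/2) = ((d+1)/2) · binom(d, (d+1)/2) vertices, namely the points with exactly one coordinate equal to 0 and the remaining d-1 coordinates in {-1,1} with equally many coordinates equal to +1 and to -1. -/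
open scoped RealInnerProductSpace

noncomputable section

open Finset

lemma sum_pm {d : ℕ} (s : Finset (Fin d)) (x : Fin d → ℝ)
    (h : ∀ j ∈ s, x j = 1 ∨ x j = -1) :
    ∑ j ∈ s, x j
      = ((s.filter (fun j => x j = 1)).card : ℝ)
        - ((s.filter (fun j => x j = -1)).card : ℝ) := by
  have h2 : ∑ j ∈ s, x j
      = ∑ j ∈ s, ((if x j = 1 then (1:ℝ) else 0) - (if x j = -1 then (1:ℝ) else 0)) := by
    refine Finset.sum_congr rfl fun j hj => ?_
    rcases h j hj with h1 | h1 <;> rw [h1] <;> norm_num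
  rw [h2, Finset.sum_sub_distrib, Finset.sum_boole, Finset.sum_boole]

lemma seg_endpoint {α β a b c : ℝ} (hα : 0 < α) (hβ : 0 < β) (hαβ : α + β = 1)
    (ha : |a| ≤ 1) (hb : |b| ≤ 1) (heq : α * a + β * b = c) (hc : c = 1 ∨ c = -1) :
    a = c ∧ b = c := by
  obtain ⟨ha1, ha2⟩ := abs_le.mp ha
  obtain ⟨hb1, hb2⟩ := abs_le.mp hb
  rcases hc with rfl | rfl <;> constructor <;> nlinarith

lemma vertex_sum_ne' {d : ℕ} (hd : Odd d) (v : Fin d → ℝ)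
    (hv : ∀ i, v i = 1 ∨ v i = -1) : ∑ i, v i ≠ 0 := by
  intro h0
  have hs := sum_pm Finset.univ v (fun j _ => hv j)
  set a := (univ.filter fun j => v j = 1).card with ha
  set b := (univ.filter fun j => v j = -1).card with hb
  have hdisj : Disjoint (univ.filter fun j => v j = 1) (univ.filter fun j => v j = -1) := by
    rw [Finset.disjoint_left]
    intro j h1 h2
    simp only [mem_filter] at h1 h2
    linarith [h1.2, h2.2]
  have huni : (univ.filter fun j => v j = 1) ∪ (univ.filter fun j => v j = -1) = univ := by
    ext j
    simp only [mem_union, mem_filter, mem_univ, true_and, iff_true]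
    exact hv j
  have hab : a + b = d := by
    rw [ha, hb, ← Finset.card_union_of_disjoint hdisj, huni, Finset.card_univ, Fintype.card_fin]
  have hab2 : (a : ℝ) = b := by rw [h0] at hs; linarith
  have : a = b := by exact_mod_cast hab2
  obtain ⟨k, hk⟩ := hd
  omega

lemma filter_eq_set {d : ℕ} (x : Fin d → ℝ) (i : Fin d) (hxi0 : x i = 0) (c : ℝ)
    (hc : c ≠ 0) :
    {j : Fin d | x j = c} = ↑((univ.erase i).filter (fun j => x j = c)) := by
  ext j
  constructor
  · intro h
    have h' : x j = c := h
    have hji : j ≠ i := by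
      intro hji; rw [hji, hxi0] at h'; exact hc h'.symm
    exact Finset.mem_coe.mpr (Finset.mem_filter.mpr
      ⟨Finset.mem_erase.mpr ⟨hji, Finset.mem_univ j⟩, h'⟩)
  · intro h
    exact (Finset.mem_filter.mp (Finset.mem_coe.mp h)).2

lemma extreme_char {d : ℕ} (hd : Odd d) :
    Set.extremePoints ℝ (cube d ∩ {x : EuclideanSpace ℝ (Fin d) | ∑ i, x i = 0})
      = {x : EuclideanSpace ℝ (Fin d) | ∃ i : Fin d, x i = 0 ∧
          (∀ j : Fin d, j ≠ i → (x j = 1 ∨ x j = -1)) ∧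
          {j : Fin d | x j = 1}.ncard = {j : Fin d | x j = -1}.ncard} := by
  ext x
  simp only [Set.extremePoints, Set.mem_inter_iff, Set.mem_setOf_eq]
  constructor
  · rintro ⟨⟨hcube, hsum⟩, hext⟩
    have hsum' : ∑ k, x k = 0 := hsum
    -- Step 1: at most one coordinate has |x i| < 1
    have key : ∀ i j : Fin d, i ≠ j → |x i| < 1 → |x j| < 1 → False := by
      intro i j hij hi hj
      set ε := min (1 - |x i|) (1 - |x j|) with hε
      have hεpos : 0 < ε := by
        simp only [hε, lt_min_iff]; constructor <;> linarith
      have hεi : ε ≤ 1 - |x i| := min_le_left _ _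
      have hεj : ε ≤ 1 - |x j| := min_le_right _ _
      set y : EuclideanSpace ℝ (Fin d) :=
        WithLp.toLp 2 (fun k => if k = i then x i + ε else if k = j then x j - ε else x k) with hy
      set z : EuclideanSpace ℝ (Fin d) :=
        WithLp.toLp 2 (fun k => if k = i then x i - ε else if k = j then x j + ε else x k) with hz
      have hyk : ∀ k, y k = x k + (if k = i then ε else 0) + (if k = j then -ε else 0) := by
        intro k
        show (if k = i then x i + ε else if k = j then x j - ε else x k) = _
        by_cases h1 : k = i
        · subst h1; rw [if_pos rfl, if_pos rfl, if_neg hij]; ring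
        · by_cases h2 : k = j
          · subst h2; rw [if_neg h1, if_pos rfl, if_neg h1, if_pos rfl]; ring
          · rw [if_neg h1, if_neg h2, if_neg h1, if_neg h2]; ring
      have hzk : ∀ k, z k = x k + (if k = i then -ε else 0) + (if k = j then ε else 0) := by
        intro k
        show (if k = i then x i - ε else if k = j then x j + ε else x k) = _
        by_cases h1 : k = i
        · subst h1; rw [if_pos rfl, if_pos rfl, if_neg hij]; ring
        · by_cases h2 : k = j
          · subst h2; rw [if_neg h1, if_pos rfl, if_neg h1, if_pos rfl]; ring
          · rw [if_neg h1, if_neg h2, if_neg h1, if_neg h2]; ring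
      have habs : ∀ (w : EuclideanSpace ℝ (Fin d)),
          (∀ k, w k = x k + (if k = i then ε else 0) + (if k = j then -ε else 0)) ∨
          (∀ k, w k = x k + (if k = i then -ε else 0) + (if k = j then ε else 0)) →
          ∀ k, |w k| ≤ 1 := by
        intro w hw k
        have hk1 := abs_le.mp (hcube k)
        have hi1 := abs_le.mp (le_of_lt hi)
        have hj1 := abs_le.mp (le_of_lt hj)
        rcases hw with hw | hw <;>
        · rw [hw k]
          rw [abs_le]
          by_cases h1 : k = i
          · have h2 : ¬ k = j := by rw [h1]; exact hij
            rw [if_pos h1, if_neg h2]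
            have : |x k| = |x i| := by rw [h1]
            have hb := abs_le.mp (hcube k)
            constructor <;> · rw [h1]; rcases abs_lt.mp hi with ⟨u1, u2⟩; simp; linarith [hεi, abs_nonneg (x i), le_abs_self (x i), neg_abs_le (x i)]
          · by_cases h2 : k = j
            · rw [if_neg h1, if_pos h2]
              constructor <;> · rw [h2]; simp; linarith [hεj, le_abs_self (x j), neg_abs_le (x j)]
            · rw [if_neg h1, if_neg h2]
              constructor <;> · simp; linarith [hk1.1, hk1.2]
      have hsumw : ∀ (w : EuclideanSpace ℝ (Fin d)) (c1 c2 : ℝ),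
          (∀ k, w k = x k + (if k = i then c1 else 0) + (if k = j then c2 else 0)) →
          ∑ k, w k = c1 + c2 := by
        intro w c1 c2 hw
        have h3 : ∑ k, w k = ∑ k, x k + ∑ k, (if k = i then c1 else 0)
            + ∑ k, (if k = j then c2 else 0) := by
          rw [← Finset.sum_add_distrib, ← Finset.sum_add_distrib]
          exact Finset.sum_congr rfl fun k _ => hw k
        rw [h3, hsum', Finset.sum_ite_eq' univ i (fun _ => c1),
          Finset.sum_ite_eq' univ j (fun _ => c2)]
        simp
      have hymem : y ∈ cube d ∩ {x : EuclideanSpace ℝ (Fin d) | ∑ i, x i = 0} :=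
        ⟨habs y (Or.inl hyk), by
          show ∑ k, y k = 0
          rw [hsumw y ε (-ε) hyk]; ring⟩
      have hzmem : z ∈ cube d ∩ {x : EuclideanSpace ℝ (Fin d) | ∑ i, x i = 0} :=
        ⟨habs z (Or.inr hzk), by
          show ∑ k, z k = 0
          rw [hsumw z (-ε) ε hzk]; ring⟩
      have hseg : x ∈ openSegment ℝ y z := by
        refine ⟨1/2, 1/2, by norm_num, by norm_num, by norm_num, ?_⟩
        ext k
        show (1/2 : ℝ) * y k + (1/2 : ℝ) * z k = x k
        rw [hyk k, hzk k]
        split_ifs <;> ring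
      have hcon : y i = x i := congrArg (fun w : EuclideanSpace ℝ (Fin d) => w i) (hext hymem hzmem hseg)
      rw [hyk i, if_pos rfl] at hcon
      by_cases hji : i = j
      · exact hij hji
      · rw [if_neg hji] at hcon; linarith
    -- Step 2: some coordinate has |x i| < 1
    have hex : ∃ i, |x i| < 1 := by
      by_contra h
      push_neg at h
      have hv : ∀ i, x i = 1 ∨ x i = -1 := by
        intro i
        have : |x i| = 1 := le_antisymm (hcube i) (h i)
        exact (abs_eq (le_of_lt one_pos)).mp this
      exact vertex_sum_ne' hd x hv hsum'
    obtain ⟨i, hi⟩ := hex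
    have hpm : ∀ j : Fin d, j ≠ i → (x j = 1 ∨ x j = -1) := by
      intro j hj
      have hle := hcube j
      have hnl : ¬ |x j| < 1 := fun h => key i j (Ne.symm hj) hi h
      exact (abs_eq (le_of_lt one_pos)).mp (le_antisymm hle (not_lt.mp hnl))
    -- Step 3: x i = 0
    set s := univ.erase i with hsdef
    have hpm' : ∀ j ∈ s, x j = 1 ∨ x j = -1 := fun j hj => hpm j (Finset.mem_erase.mp hj).1
    have hs := sum_pm s x hpm'
    set a := (s.filter (fun j => x j = 1)).card with hadef
    set b := (s.filter (fun j => x j = -1)).card with hbdef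
    have hsplit : ∑ j ∈ s, x j + x i = 0 := by
      rw [Finset.sum_erase_add univ x (Finset.mem_univ i)]; exact hsum'
    have hxi : x i = (b : ℝ) - a := by rw [hs] at hsplit; linarith
    have hab : a = b := by
      have h1 : |(b : ℝ) - (a : ℝ)| < 1 := by rw [← hxi]; exact hi
      obtain ⟨h2, h3⟩ := abs_lt.mp h1
      have hba : (b:ℝ) < (a:ℝ) + 1 := by linarith
      have hab' : (a:ℝ) < (b:ℝ) + 1 := by linarith
      have hba2 : b < a + 1 := by exact_mod_cast hba
      have hab2 : a < b + 1 := by exact_mod_cast hab'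
      omega
    have hxi0 : x i = 0 := by rw [hxi, hab]; ring
    refine ⟨i, hxi0, hpm, ?_⟩
    rw [filter_eq_set x i hxi0 1 one_ne_zero,
      filter_eq_set x i hxi0 (-1) (by norm_num),
      Set.ncard_coe_finset, Set.ncard_coe_finset, ← hsdef, ← hadef, ← hbdef, hab]
  · rintro ⟨i, hxi0, hpm, hcnt⟩
    set s := univ.erase i with hsdef
    have hpm' : ∀ j ∈ s, x j = 1 ∨ x j = -1 := fun j hj => hpm j (Finset.mem_erase.mp hj).1
    have hab : (s.filter (fun j => x j = 1)).card = (s.filter (fun j => x j = -1)).card := by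
      rw [filter_eq_set x i hxi0 1 one_ne_zero,
        filter_eq_set x i hxi0 (-1) (by norm_num),
        Set.ncard_coe_finset, Set.ncard_coe_finset, ← hsdef] at hcnt
      exact hcnt
    have hsum : ∑ k, x k = 0 := by
      have hsplit : ∑ j ∈ s, x j + x i = ∑ k, x k :=
        Finset.sum_erase_add univ x (Finset.mem_univ i)
      rw [← hsplit, sum_pm s x hpm', hab, hxi0]; ring
    have hcube : x ∈ cube d := by
      intro k
      by_cases hk : k = i
      · rw [hk, hxi0]; norm_num
      · rcases hpm k hk with h | h <;> rw [h] <;> norm_num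
    refine ⟨⟨hcube, hsum⟩, ?_⟩
    intro y hy z hz hseg
    obtain ⟨α, β, hα, hβ, hαβ, heq⟩ := hseg
    have hcoord : ∀ j : Fin d, j ≠ i → y j = x j ∧ z j = x j := by
      intro j hj
      have hxj : α * y j + β * z j = x j := by
        have h := congrArg (fun w : EuclideanSpace ℝ (Fin d) => w j) heq
        simpa [PiLp.add_apply, PiLp.smul_apply, smul_eq_mul] using h
      exact seg_endpoint hα hβ hαβ (hy.1 j) (hz.1 j) hxj (hpm j hj)
    have hyi : y i = x i := by
      have h1 : ∑ j ∈ s, y j + y i = 0 := by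
        rw [Finset.sum_erase_add univ y (Finset.mem_univ i)]; exact hy.2
      have h2 : ∑ j ∈ s, x j + x i = 0 := by
        rw [Finset.sum_erase_add univ x (Finset.mem_univ i)]; exact hsum
      have h3 : ∑ j ∈ s, y j = ∑ j ∈ s, x j :=
        Finset.sum_congr rfl fun j hj => (hcoord j (Finset.mem_erase.mp hj).1).1
      rw [h3] at h1; linarith
    have hzi : z i = x i := by
      have h1 : ∑ j ∈ s, z j + z i = 0 := by
        rw [Finset.sum_erase_add univ z (Finset.mem_univ i)]; exact hz.2
      have h2 : ∑ j ∈ s, x j + x i = 0 := by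
        rw [Finset.sum_erase_add univ x (Finset.mem_univ i)]; exact hsum
      have h3 : ∑ j ∈ s, z j = ∑ j ∈ s, x j :=
        Finset.sum_congr rfl fun j hj => (hcoord j (Finset.mem_erase.mp hj).1).2
      rw [h3] at h1; linarith
    ext j
    by_cases hj : j = i
    · rw [hj]; exact hyi
    · exact (hcoord j hj).1

lemma count_lemma {d k : ℕ} (hk : d = 2 * k + 1) :
    {x : EuclideanSpace ℝ (Fin d) | ∃ i : Fin d, x i = 0 ∧
        (∀ j : Fin d, j ≠ i → (x j = 1 ∨ x j = -1)) ∧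
        {j : Fin d | x j = 1}.ncard = {j : Fin d | x j = -1}.ncard}.ncard
      = d * Nat.choose (2 * k) k := by
  classical
  set g : (Σ _ : Fin d, Finset (Fin d)) → EuclideanSpace ℝ (Fin d) :=
    (fun p => WithLp.toLp 2 (fun j => if j = p.1 then (0:ℝ) else if j ∈ p.2 then 1 else -1)) with hg
  set dom : Finset (Σ _ : Fin d, Finset (Fin d)) :=
    univ.sigma (fun i => (univ.erase i).powersetCard k) with hdom
  have hgapp : ∀ p (j : Fin d), g p j = if j = p.1 then 0 else if j ∈ p.2 then 1 else -1 :=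
    fun p j => rfl
  have hdommem : ∀ p, p ∈ dom ↔ p.2 ⊆ univ.erase p.1 ∧ p.2.card = k := by
    intro p
    rw [hdom, Finset.mem_sigma, Finset.mem_powersetCard]
    simp
  -- the set equals the image
  have hset : {x : EuclideanSpace ℝ (Fin d) | ∃ i : Fin d, x i = 0 ∧
        (∀ j : Fin d, j ≠ i → (x j = 1 ∨ x j = -1)) ∧
        {j : Fin d | x j = 1}.ncard = {j : Fin d | x j = -1}.ncard}
      = ↑(dom.image g) := by
    ext x
    simp only [Set.mem_setOf_eq, Finset.coe_image, Set.mem_image, Finset.mem_coe]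
    constructor
    · rintro ⟨i, hxi0, hpm, hcnt⟩
      set S := (univ.erase i).filter (fun j => x j = 1) with hS
      set T := (univ.erase i).filter (fun j => x j = -1) with hT
      have e1 : {j : Fin d | x j = 1} = ↑S := by
        ext j
        simp only [Set.mem_setOf_eq, hS, Finset.coe_filter, mem_erase, mem_univ, and_true,
          Set.mem_setOf_eq]
        constructor
        · intro h
          refine ⟨?_, h⟩
          intro hji; rw [hji, hxi0] at h; norm_num at h
        · exact fun h => h.2
      have e2 : {j : Fin d | x j = -1} = ↑T := by
        ext j
        simp only [Set.mem_setOf_eq, hT, Finset.coe_filter, mem_erase, mem_univ, and_true,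
          Set.mem_setOf_eq]
        constructor
        · intro h
          refine ⟨?_, h⟩
          intro hji; rw [hji, hxi0] at h; norm_num at h
        · exact fun h => h.2
      have hST : Disjoint S T := by
        rw [Finset.disjoint_left]
        intro j h1 h2
        simp only [hS, hT, mem_filter] at h1 h2
        linarith [h1.2, h2.2]
      have hSTu : S ∪ T = univ.erase i := by
        ext j
        simp only [hS, hT, mem_union, mem_filter, mem_erase, mem_univ, and_true, true_and]
        constructor
        · rintro (⟨h, _⟩ | ⟨h, _⟩) <;> exact h
        · intro h
          rcases hpm j h with h1 | h1
          · exact Or.inl ⟨h, h1⟩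
          · exact Or.inr ⟨h, h1⟩
      have hcards : S.card + T.card = 2 * k := by
        rw [← Finset.card_union_of_disjoint hST, hSTu, Finset.card_erase_of_mem (mem_univ i),
          Finset.card_univ, Fintype.card_fin, hk]
        omega
      have hScard : S.card = k := by
        have : S.card = T.card := by
          rw [e1, e2, Set.ncard_coe_finset, Set.ncard_coe_finset] at hcnt
          exact hcnt
        omega
      refine ⟨⟨i, S⟩, ?_, ?_⟩
      · rw [hdommem]
        exact ⟨Finset.filter_subset _ _, hScard⟩
      · ext j
        rw [hgapp]
        by_cases hj : j = i
        · rw [if_pos hj, hj, hxi0]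
        · rw [if_neg hj]
          rcases hpm j hj with h1 | h1
          · rw [if_pos, h1]
            simp only [hS, mem_filter, mem_erase, mem_univ, and_true]
            exact ⟨hj, h1⟩
          · rw [if_neg, h1]
            simp only [hS, mem_filter, mem_erase, mem_univ, and_true]
            rintro ⟨-, h2⟩
            rw [h1] at h2; norm_num at h2
    · rintro ⟨⟨i, S⟩, hp, rfl⟩
      rw [hdommem] at hp
      obtain ⟨hSsub, hScard⟩ := hp
      have hSsub' : S ⊆ univ.erase i := hSsub
      have hScard' : S.card = k := hScard
      have hiS : i ∉ S := fun h => (Finset.mem_erase.mp (hSsub h)).1 rfl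
      have hx0 : g ⟨i, S⟩ i = 0 := by rw [hgapp, if_pos rfl]
      refine ⟨i, hx0, ?_, ?_⟩
      · intro j hj
        rw [hgapp, if_neg hj]
        by_cases h : j ∈ S
        · rw [if_pos h]; exact Or.inl rfl
        · rw [if_neg h]; exact Or.inr rfl
      · have e1 : {j : Fin d | g ⟨i, S⟩ j = 1} = ↑S := by
          ext j
          simp only [Set.mem_setOf_eq, Finset.mem_coe, hgapp]
          constructor
          · intro h
            by_cases hj : j = i
            · rw [if_pos hj] at h; norm_num at h
            · rw [if_neg hj] at h
              by_cases h2 : j ∈ S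
              · exact h2
              · rw [if_neg h2] at h; norm_num at h
          · intro h
            have hj : j ≠ i := fun hji => hiS (hji ▸ h)
            rw [if_neg hj, if_pos h]
        have e2 : {j : Fin d | g ⟨i, S⟩ j = -1} = ↑((univ.erase i) \ S) := by
          ext j
          simp only [Set.mem_setOf_eq, Finset.coe_sdiff, Set.mem_diff, Finset.mem_coe,
            mem_erase, mem_univ, and_true, hgapp]
          constructor
          · intro h
            by_cases hj : j = i
            · rw [if_pos hj] at h; norm_num at h
            · rw [if_neg hj] at h
              by_cases h2 : j ∈ S
              · rw [if_pos h2] at h; norm_num at h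
              · exact ⟨hj, h2⟩
          · rintro ⟨hj, h2⟩
            rw [if_neg hj, if_neg h2]
        rw [e1, e2, Set.ncard_coe_finset, Set.ncard_coe_finset,
          Finset.card_sdiff_of_subset hSsub', Finset.card_erase_of_mem (mem_univ i),
          Finset.card_univ, Fintype.card_fin]
        omega
  -- injectivity
  have hinj : Set.InjOn g ↑dom := by
    intro p hp q hq hpq
    rw [Finset.mem_coe, hdommem] at hp hq
    have hp1 : p.2 ⊆ univ.erase p.1 := hp.1
    have hq1 : q.2 ⊆ univ.erase q.1 := hq.1
    have hip : p.1 ∉ p.2 := fun h => (Finset.mem_erase.mp (hp1 h)).1 rfl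
    have hiq : q.1 ∉ q.2 := fun h => (Finset.mem_erase.mp (hq1 h)).1 rfl
    have h1 : p.1 = q.1 := by
      by_contra h
      have this : g p p.1 = g q p.1 := congrArg (fun w : EuclideanSpace ℝ (Fin d) => w p.1) hpq
      rw [hgapp, hgapp, if_pos rfl, if_neg h] at this
      by_cases h2 : p.1 ∈ q.2
      · rw [if_pos h2] at this; norm_num at this
      · rw [if_neg h2] at this; norm_num at this
    have h2 : p.2 = q.2 := by
      ext j
      by_cases hj : j = p.1
      · constructor
        · intro h; exact absurd (hj ▸ h) hip
        · intro h
          rw [hj, h1] at h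
          exact absurd h hiq
      · have this : g p j = g q j := congrArg (fun w : EuclideanSpace ℝ (Fin d) => w j) hpq
        have hj' : ¬ j = q.1 := by rw [← h1]; exact hj
        rw [hgapp, hgapp, if_neg hj, if_neg hj'] at this
        constructor
        · intro h
          rw [if_pos h] at this
          by_cases h3 : j ∈ q.2
          · exact h3
          · rw [if_neg h3] at this; norm_num at this
        · intro h
          rw [if_pos h] at this
          by_cases h3 : j ∈ p.2
          · exact h3
          · rw [if_neg h3] at this; norm_num at this
    obtain ⟨i1, S1⟩ := p
    obtain ⟨i2, S2⟩ := q
    simp only at h1 h2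
    subst h1; subst h2; rfl
  -- count
  rw [hset, Set.ncard_coe_finset, Finset.card_image_of_injOn hinj, hdom,
    Finset.card_sigma]
  have hcardterm : ∀ i : Fin d, ((univ.erase i).powersetCard k).card = Nat.choose (2 * k) k := by
    intro i
    rw [Finset.card_powersetCard, Finset.card_erase_of_mem (mem_univ i),
      Finset.card_univ, Fintype.card_fin, hk]
    norm_num
  rw [Finset.sum_congr rfl (fun i _ => hcardterm i), Finset.sum_const, Finset.card_univ,
    Fintype.card_fin, smul_eq_mul]

/-- Let `d` be odd and `u = (1,…,1)`, so `u^⊥ = {x | x_1 + ⋯ + x_d = 0}`. Then `u^⊥` contains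
no vertex of the cube `C_d`, and the vertices (extreme points) of `C_d ∩ u^⊥` are exactly the
points with one coordinate `0` and the remaining `d-1` coordinates in `{-1,1}`, equally many
being `+1` and `-1`; there are exactly `d · choose (d-1) ((d-1)/2)
= ((d+1)/2) · choose d ((d+1)/2)` of them. -/
theorem odd_dim_central_slice_vertices (d : ℕ) (hd : Odd d) :
    (∀ v ∈ cubeVertices d, ∑ i, v i ≠ 0) ∧
    Set.extremePoints ℝ (cube d ∩ {x : EuclideanSpace ℝ (Fin d) | ∑ i, x i = 0})
      = {x : EuclideanSpace ℝ (Fin d) | ∃ i : Fin d, x i = 0 ∧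
          (∀ j : Fin d, j ≠ i → (x j = 1 ∨ x j = -1)) ∧
          {j : Fin d | x j = 1}.ncard = {j : Fin d | x j = -1}.ncard} ∧
    (Set.extremePoints ℝ (cube d ∩ {x : EuclideanSpace ℝ (Fin d) | ∑ i, x i = 0})).ncard
      = d * Nat.choose (d - 1) ((d - 1) / 2) ∧
    d * Nat.choose (d - 1) ((d - 1) / 2) = ((d + 1) / 2) * Nat.choose d ((d + 1) / 2) := by
  obtain ⟨k, hk'⟩ := id hd
  have hk : d = 2 * k + 1 := by omega
  have e1 : d - 1 = 2 * k := by omega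
  have e2 : (d - 1) / 2 = k := by omega
  have e3 : (d + 1) / 2 = k + 1 := by omega
  refine ⟨fun v hv => vertex_sum_ne' hd v hv, extreme_char hd, ?_, ?_⟩
  · rw [extreme_char hd, count_lemma hk, e2, e1]
  · rw [e2, e1, e3, hk]
    rw [mul_comm (k + 1)]
    exact Nat.add_one_mul_choose_eq (2 * k) k
end
end

section
/- Let d be even and let u = (1,...,1,0) in R^d. Then the hyperplane u^⊥ = {x : x_1 + ... + x_{d-1} = 0} contains no vertex of the cube C_d, it intersects no edge of C_d parallel to the d-th coordinate direction, and the polytope C_d ∩ u^⊥ has exactly 2(d-1) · binom(d-2, (d-2)/2) = (d/2) · binom(d, d/2) vertices. -/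
open scoped RealInnerProductSpace

noncomputable section

namespace CubeSlice

variable {d : ℕ}


variable {d : ℕ}

def idx (d : ℕ) : Finset (Fin d) := Finset.univ.filter (fun i : Fin d => (i : ℕ) < d - 1)

lemma mem_idx {i : Fin d} : i ∈ idx d ↔ (i : ℕ) < d - 1 := by simp [idx]

lemma card_idx (hd0 : 0 < d) : (idx d).card = d - 1 := by
  have h : d - 1 < d := by omega
  have he : idx d = Finset.Iio (⟨d - 1, h⟩ : Fin d) := by
    ext i; simp [idx, Fin.lt_def]
  rw [he, Fin.card_Iio]

lemma sum_pm (t : Finset (Fin d)) (x : EuclideanSpace ℝ (Fin d))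
    (h : ∀ j ∈ t, x j = 1 ∨ x j = -1) :
    ∑ j ∈ t, x j = 2 * ((t.filter (fun j => x j = 1)).card : ℝ) - t.card := by
  classical
  rw [← Finset.sum_filter_add_sum_filter_not t (fun j => x j = 1)]
  have h1 : ∑ j ∈ t.filter (fun j => x j = 1), x j
      = ((t.filter (fun j => x j = 1)).card : ℝ) := by
    rw [Finset.sum_congr rfl (fun j hj => (Finset.mem_filter.mp hj).2), Finset.sum_const,
      nsmul_eq_mul, mul_one]
  have h2 : ∑ j ∈ t.filter (fun j => ¬ x j = 1), x j
      = -((t.filter (fun j => ¬ x j = 1)).card : ℝ) := by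
    rw [Finset.sum_congr rfl (fun j hj => ?_), Finset.sum_const, nsmul_eq_mul, mul_neg_one]
    rcases h j (Finset.mem_filter.mp hj).1 with h' | h'
    · exact absurd h' (Finset.mem_filter.mp hj).2
    · exact h'
  have h3 : (t.filter (fun j => x j = 1)).card + (t.filter (fun j => ¬ x j = 1)).card = t.card :=
    Finset.card_filter_add_card_filter_not _
  rw [h1, h2]
  have h4 := congrArg (fun n : ℕ => (n : ℝ)) h3
  push_cast at h4 ⊢
  linarith

lemma sum_ne_zero (hd : Even d) (hd0 : 0 < d) (x : EuclideanSpace ℝ (Fin d))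
    (hx : ∀ j ∈ idx d, x j = 1 ∨ x j = -1) : ∑ i ∈ idx d, x i ≠ 0 := by
  rw [sum_pm _ _ hx, card_idx hd0]
  intro h
  obtain ⟨r, hr⟩ := hd
  set c := ((idx d).filter (fun j => x j = 1)).card with hc
  have : ((d - 1 : ℕ) : ℝ) = ((2 * c : ℕ) : ℝ) := by push_cast; linarith
  have h5 : d - 1 = 2 * c := Nat.cast_injective this
  omega


def phi (d : ℕ) (b : Bool) (i : Fin d) (S : Finset (Fin d)) : EuclideanSpace ℝ (Fin d) :=
  WithLp.toLp 2 (fun j : Fin d => if (j : ℕ) = d - 1 then (if b then (1 : ℝ) else -1)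
    else if j = i then 0 else if j ∈ S then 1 else -1)

def T (d : ℕ) : Finset (Bool × (Σ _ : Fin d, Finset (Fin d))) :=
  Finset.univ ×ˢ (idx d).sigma (fun i => ((idx d).erase i).powersetCard ((d - 2) / 2))

def phi' (d : ℕ) (p : Bool × (Σ _ : Fin d, Finset (Fin d))) : EuclideanSpace ℝ (Fin d) :=
  phi d p.1 p.2.1 p.2.2

lemma card_T (hd0 : 0 < d) : (T d).card = 2 * ((d - 1) * Nat.choose (d - 2) ((d - 2) / 2)) := by
  rw [T, Finset.card_product, Finset.card_univ, Fintype.card_bool, Finset.card_sigma]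
  congr 1
  rw [Finset.sum_congr rfl (fun i hi => ?_), Finset.sum_const, card_idx hd0, smul_eq_mul]
  rw [Finset.card_powersetCard, Finset.card_erase_of_mem hi, card_idx hd0]
  have h11 : d - 1 - 1 = d - 2 := by omega
  rw [h11]

lemma mem_T {p : Bool × (Σ _ : Fin d, Finset (Fin d))} :
    p ∈ T d ↔ (p.2.1 : ℕ) < d - 1 ∧ p.2.2 ⊆ (idx d).erase p.2.1 ∧ p.2.2.card = (d - 2) / 2 := by
  simp [T, Finset.mem_sigma, Finset.mem_powersetCard, mem_idx, and_assoc]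


def hyp (d : ℕ) : Set (EuclideanSpace ℝ (Fin d)) := {x | ∑ i ∈ idx d, x i = 0}

variable {b : Bool} {i : Fin d} {S : Finset (Fin d)}

lemma phi_apply (j : Fin d) : phi d b i S j = if (j : ℕ) = d - 1 then (if b then (1 : ℝ) else -1)
    else if j = i then 0 else if j ∈ S then 1 else -1 := rfl

lemma phi_apply_last {j : Fin d} (hj : (j : ℕ) = d - 1) :
    phi d b i S j = if b then 1 else -1 := by
  rw [phi_apply, if_pos hj]

lemma phi_apply_i (hil : (i : ℕ) < d - 1) : phi d b i S i = 0 := by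
  rw [phi_apply, if_neg (by omega), if_pos rfl]

lemma phi_apply_other {j : Fin d} (hj : (j : ℕ) < d - 1) (hne : j ≠ i) :
    phi d b i S j = if j ∈ S then 1 else -1 := by
  rw [phi_apply, if_neg (by omega), if_neg hne]

lemma phi_cube : phi d b i S ∈ cube d := by
  intro j
  rw [phi_apply]
  split_ifs <;> norm_num

lemma sum_phi (hd : Even d) (hd0 : 0 < d) {p : Bool × (Σ _ : Fin d, Finset (Fin d))}
    (hp : p ∈ T d) : ∑ j ∈ idx d, phi' d p j = 0 := by
  obtain ⟨hi, hS, hcard⟩ := mem_T.mp hp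
  have hmem : p.2.1 ∈ idx d := mem_idx.mpr hi
  simp only [phi']
  rw [← Finset.add_sum_erase _ _ hmem]
  have hpm : ∀ j ∈ (idx d).erase p.2.1, phi d p.1 p.2.1 p.2.2 j = 1 ∨ phi d p.1 p.2.1 p.2.2 j = -1 := by
    intro j hj
    obtain ⟨hne, hjm⟩ := Finset.mem_erase.mp hj
    rw [phi_apply_other (mem_idx.mp hjm) hne]
    split
    · exact Or.inl rfl
    · exact Or.inr rfl
  rw [phi_apply_i hi, zero_add, sum_pm _ _ hpm]
  have hfe : ((idx d).erase p.2.1).filter (fun j => phi d p.1 p.2.1 p.2.2 j = 1) = p.2.2 := by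
    ext j
    simp only [Finset.mem_filter, Finset.mem_erase]
    constructor
    · rintro ⟨⟨hne, hjm⟩, hv⟩
      rw [phi_apply_other (mem_idx.mp hjm) hne] at hv
      by_contra hns
      rw [if_neg hns] at hv
      norm_num at hv
    · intro hjS
      have hje := hS hjS
      obtain ⟨hne, hjm⟩ := Finset.mem_erase.mp hje
      refine ⟨⟨hne, hjm⟩, ?_⟩
      rw [phi_apply_other (mem_idx.mp hjm) hne, if_pos hjS]
  rw [hfe, hcard, Finset.card_erase_of_mem hmem, card_idx hd0]
  obtain ⟨r, hr⟩ := hd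
  have hnat : d - 1 - 1 = 2 * ((d - 2) / 2) := by omega
  rw [hnat]
  push_cast
  ring

lemma phi_mem (hd : Even d) (hd0 : 0 < d) {p : Bool × (Σ _ : Fin d, Finset (Fin d))}
    (hp : p ∈ T d) : phi' d p ∈ cube d ∩ hyp d :=
  ⟨phi_cube, sum_phi hd hd0 hp⟩

lemma pinch {a c p q r : ℝ} (ha : 0 < a) (hc : 0 < c) (hac : a + c = 1)
    (hp : |p| ≤ 1) (hq : |q| ≤ 1) (h : a * p + c * q = r) (hr : r = 1 ∨ r = -1) :
    p = r ∧ q = r := by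
  obtain ⟨hp1, hp2⟩ := abs_le.mp hp
  obtain ⟨hq1, hq2⟩ := abs_le.mp hq
  rcases hr with rfl | rfl
  · have h2 : 0 ≤ a * (1 - p) := mul_nonneg ha.le (by linarith)
    have h3 : 0 ≤ c * (1 - q) := mul_nonneg hc.le (by linarith)
    have hsum : a * (1 - p) + c * (1 - q) = 0 := by linear_combination hac - h
    have h4 : a * (1 - p) = 0 := by linarith
    have h5 : c * (1 - q) = 0 := by linarith
    constructor
    · rcases mul_eq_zero.mp h4 with h' | h' <;> linarith
    · rcases mul_eq_zero.mp h5 with h' | h' <;> linarith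
  · have h2 : 0 ≤ a * (p + 1) := mul_nonneg ha.le (by linarith)
    have h3 : 0 ≤ c * (q + 1) := mul_nonneg hc.le (by linarith)
    have hsum : a * (p + 1) + c * (q + 1) = 0 := by linear_combination hac + h
    have h4 : a * (p + 1) = 0 := by linarith
    have h5 : c * (q + 1) = 0 := by linarith
    constructor
    · rcases mul_eq_zero.mp h4 with h' | h' <;> linarith
    · rcases mul_eq_zero.mp h5 with h' | h' <;> linarith

lemma comb_apply (a c : ℝ) (y z : EuclideanSpace ℝ (Fin d)) (j : Fin d) :
    (a • y + c • z) j = a * y j + c * z j := rfl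


lemma phi_extreme (hd : Even d) (hd0 : 0 < d) {p : Bool × (Σ _ : Fin d, Finset (Fin d))}
    (hp : p ∈ T d) : phi' d p ∈ Set.extremePoints ℝ (cube d ∩ hyp d) := by
  obtain ⟨hi, hS, hcard⟩ := mem_T.mp hp
  have hmem : p.2.1 ∈ idx d := mem_idx.mpr hi
  refine mem_extremePoints.mpr ⟨phi_mem hd hd0 hp, ?_⟩
  rintro y ⟨hyc, hys⟩ z ⟨hzc, hzs⟩ hseg
  obtain ⟨a, c, ha, hc, hac, hxy⟩ := hseg
  have hco : ∀ j, a * y j + c * z j = phi' d p j := by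
    intro j
    rw [← comb_apply, hxy]
  have key : ∀ j, (phi' d p j = 1 ∨ phi' d p j = -1) → y j = phi' d p j ∧ z j = phi' d p j :=
    fun j hj => pinch ha hc hac (hyc j) (hzc j) (hco j) hj
  have hall : ∀ j, j ≠ p.2.1 → y j = phi' d p j ∧ z j = phi' d p j := by
    intro j hne
    apply key
    rcases Nat.lt_or_ge (j : ℕ) (d - 1) with h | h
    · rw [phi', phi_apply_other h hne]
      split
      · exact Or.inl rfl
      · exact Or.inr rfl
    · have hj : (j : ℕ) = d - 1 := by have := j.isLt; omega
      rw [phi', phi_apply_last hj]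
      split
      · exact Or.inl rfl
      · exact Or.inr rfl
  have hsame : ∀ w : EuclideanSpace ℝ (Fin d), (∑ j ∈ idx d, w j = 0) →
      (∀ j, j ≠ p.2.1 → w j = phi' d p j) → w = phi' d p := by
    intro w hws hwall
    have h1 : w p.2.1 + ∑ j ∈ (idx d).erase p.2.1, w j = 0 := by
      rw [Finset.add_sum_erase _ _ hmem]; exact hws
    have h2 : phi' d p p.2.1 + ∑ j ∈ (idx d).erase p.2.1, phi' d p j = 0 := by
      rw [Finset.add_sum_erase _ _ hmem]; exact sum_phi hd hd0 hp
    have h3 : ∑ j ∈ (idx d).erase p.2.1, w j = ∑ j ∈ (idx d).erase p.2.1, phi' d p j :=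
      Finset.sum_congr rfl (fun j hj => hwall j (Finset.mem_erase.mp hj).1)
    refine PiLp.ext fun j => ?_
    by_cases hje : j = p.2.1
    · subst hje; linarith
    · exact hwall j hje
  exact ⟨hsame y hys (fun j h => (hall j h).1), hsame z hzs (fun j h => (hall j h).2)⟩

lemma phi_injOn : Set.InjOn (phi' d) (T d) := by
  intro p hp q hq he
  obtain ⟨hip, hSp, hcp⟩ := mem_T.mp hp
  obtain ⟨hiq, hSq, hcq⟩ := mem_T.mp hq
  obtain ⟨b, i, S⟩ := p
  obtain ⟨b', i', S'⟩ := q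
  simp only at hip hSp hcp hiq hSq hcq
  have happ : ∀ j, phi d b i S j = phi d b' i' S' j := fun j => congrArg (fun v : EuclideanSpace ℝ (Fin d) => v j) he
  -- i = i'
  have hii : i = i' := by
    by_contra hne
    have h1 := happ i'
    rw [phi_apply_i hiq, phi_apply_other hiq (Ne.symm hne)] at h1
    revert h1
    split <;> norm_num
  subst hii
  -- b = b'
  have hlast : d - 1 < d := by omega
  have hb : b = b' := by
    have h1 := happ ⟨d - 1, hlast⟩
    rw [phi_apply_last rfl, phi_apply_last rfl] at h1
    revert h1
    rcases b <;> rcases b' <;> norm_num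
  subst hb
  -- S = S'
  have hSS : S = S' := by
    ext j
    constructor
    · intro hj
      have hje := hSp hj
      obtain ⟨hne, hjm⟩ := Finset.mem_erase.mp hje
      have h1 := happ j
      rw [phi_apply_other (mem_idx.mp hjm) hne, phi_apply_other (mem_idx.mp hjm) hne,
        if_pos hj] at h1
      by_contra hns
      rw [if_neg hns] at h1
      norm_num at h1
    · intro hj
      have hje := hSq hj
      obtain ⟨hne, hjm⟩ := Finset.mem_erase.mp hje
      have h1 := happ j
      rw [phi_apply_other (mem_idx.mp hjm) hne, phi_apply_other (mem_idx.mp hjm) hne,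
        if_pos hj] at h1
      by_contra hns
      rw [if_neg hns] at h1
      norm_num at h1
  subst hSS
  rfl


lemma perturb_mem {x : EuclideanSpace ℝ (Fin d)} (w : EuclideanSpace ℝ (Fin d))
    (hx : x ∈ cube d ∩ hyp d) (hcube : ∀ j, |x j + w j| ≤ 1)
    (hsum : ∑ j ∈ idx d, w j = 0) : x + w ∈ cube d ∩ hyp d := by
  have hxs : ∑ i ∈ idx d, x i = 0 := hx.2
  refine ⟨fun j => hcube j, ?_⟩
  show ∑ i ∈ idx d, (x + w) i = 0
  calc ∑ i ∈ idx d, (x + w) i = ∑ i ∈ idx d, (x i + w i) := rfl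
    _ = 0 := by rw [Finset.sum_add_distrib, hxs, hsum, add_zero]

lemma no_move {x w : EuclideanSpace ℝ (Fin d)}
    (hx : x ∈ Set.extremePoints ℝ (cube d ∩ hyp d))
    (h1 : x + w ∈ cube d ∩ hyp d) (h2 : x + -w ∈ cube d ∩ hyp d) : w = 0 := by
  obtain ⟨hxP, hext⟩ := mem_extremePoints.mp hx
  have hseg : x ∈ openSegment ℝ (x + w) (x + -w) :=
    ⟨1/2, 1/2, by norm_num, by norm_num, by norm_num, by module⟩
  have h3 := (hext _ h1 _ h2 hseg).1
  have h4 : x + w = x + 0 := by rw [h3, add_zero]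
  exact add_left_cancel h4

lemma sum_single {j0 : Fin d} (hj0 : j0 ∈ idx d) (ε : ℝ) :
    ∑ j ∈ idx d, EuclideanSpace.single j0 ε j = ε := by
  rw [Finset.sum_eq_single_of_mem j0 hj0
    (fun b hb hne => by simp [EuclideanSpace.single_apply, hne])]
  simp [EuclideanSpace.single_apply]

lemma abs_lt_one {v : ℝ} (h1 : |v| ≤ 1) (h2 : ¬(v = 1 ∨ v = -1)) : |v| < 1 := by
  push_neg at h2
  rcases lt_or_eq_of_le h1 with h | h
  · exact h
  · rcases abs_eq (by norm_num : (0:ℝ) ≤ 1) |>.mp h with h' | h'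
    · exact absurd h' h2.1
    · exact absurd h' h2.2

lemma extreme_subset (hd : Even d) (hd0 : 0 < d) {x : EuclideanSpace ℝ (Fin d)}
    (hx : x ∈ Set.extremePoints ℝ (cube d ∩ hyp d)) : ∃ p ∈ T d, phi' d p = x := by
  have hxP := (mem_extremePoints.mp hx).1
  obtain ⟨hxc, hxs⟩ := hxP
  have hxs' : ∑ i ∈ idx d, x i = 0 := hxs
  have hd2 : 2 ≤ d := by obtain ⟨r, hr⟩ := hd; omega
  have hlastlt : d - 1 < d := by omega
  set L : Fin d := ⟨d - 1, hlastlt⟩ with hL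
  -- Step A : |x L| = 1
  have hA : x L = 1 ∨ x L = -1 := by
    by_contra hcon
    have habs : |x L| < 1 := abs_lt_one (hxc L) hcon
    set ε : ℝ := 1 - |x L| with hε'
    have hε : 0 < ε := by linarith
    set w : EuclideanSpace ℝ (Fin d) := EuclideanSpace.single L ε with hw
    have hw0 : ∀ j, j ≠ L → w j = 0 := fun j hj => by
      simp [hw, EuclideanSpace.single_apply, hj]
    have hwL : w L = ε := by simp [hw, EuclideanSpace.single_apply]
    have hwsum : ∑ j ∈ idx d, w j = 0 := by
      refine Finset.sum_eq_zero (fun j hj => hw0 j ?_)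
      intro h
      have h2 := mem_idx.mp hj
      rw [h] at h2
      simp only [hL] at h2
      omega
    have hb1 : ∀ j, |x j + w j| ≤ 1 := by
      intro j
      by_cases hj : j = L
      · subst hj
        rw [hwL]
        have h1 := neg_abs_le (x L)
        have h2 := le_abs_self (x L)
        rw [abs_le]
        constructor <;> [linarith; linarith]
      · rw [hw0 j hj, add_zero]; exact hxc j
    have hb2 : ∀ j, |x j + -w j| ≤ 1 := by
      intro j
      by_cases hj : j = L
      · subst hj
        rw [hwL]
        have h1 := neg_abs_le (x L)
        have h2 := le_abs_self (x L)
        rw [abs_le]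
        constructor <;> [linarith; linarith]
      · rw [hw0 j hj, neg_zero, add_zero]; exact hxc j
    have hm1 := perturb_mem w ⟨hxc, hxs⟩ hb1 hwsum
    have hm2 := perturb_mem (-w) ⟨hxc, hxs⟩ (fun j => hb2 j)
      (by show ∑ j ∈ idx d, -(w j) = 0
          rw [Finset.sum_neg_distrib, hwsum, neg_zero])
    have h0 := no_move hx hm1 hm2
    have : w L = 0 := by rw [h0]; rfl
    rw [hwL] at this
    linarith
  -- the finset of non-vertex coordinates
  classical
  set t : Finset (Fin d) := (idx d).filter (fun j => ¬(x j = 1 ∨ x j = -1)) with ht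
  -- Step B : t.card ≤ 1
  have hB : t.card ≤ 1 := by
    by_contra hcon
    push_neg at hcon
    obtain ⟨j₁, hj₁, j₂, hj₂, hne⟩ := Finset.one_lt_card.mp hcon
    obtain ⟨hj₁i, hj₁n⟩ := Finset.mem_filter.mp hj₁
    obtain ⟨hj₂i, hj₂n⟩ := Finset.mem_filter.mp hj₂
    have ha1 : |x j₁| < 1 := abs_lt_one (hxc j₁) hj₁n
    have ha2 : |x j₂| < 1 := abs_lt_one (hxc j₂) hj₂n
    set ε : ℝ := min (1 - |x j₁|) (1 - |x j₂|) with hε'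
    have hε : 0 < ε := lt_min (by linarith) (by linarith)
    have hε1 : ε ≤ 1 - |x j₁| := min_le_left _ _
    have hε2 : ε ≤ 1 - |x j₂| := min_le_right _ _
    set w : EuclideanSpace ℝ (Fin d) :=
      EuclideanSpace.single j₁ ε - EuclideanSpace.single j₂ ε with hw
    have hwap : ∀ j, w j = EuclideanSpace.single j₁ ε j - EuclideanSpace.single j₂ ε j :=
      fun j => rfl
    have hw1 : w j₁ = ε := by
      rw [hwap]; simp [EuclideanSpace.single_apply, hne]
    have hw2 : w j₂ = -ε := by
      rw [hwap]; simp [EuclideanSpace.single_apply, Ne.symm hne]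
    have hw0 : ∀ j, j ≠ j₁ → j ≠ j₂ → w j = 0 := fun j h1 h2 => by
      rw [hwap]; simp [EuclideanSpace.single_apply, h1, h2]
    have hwsum : ∑ j ∈ idx d, w j = 0 := by
      rw [Finset.sum_congr rfl (fun j _ => hwap j), Finset.sum_sub_distrib,
        sum_single hj₁i ε, sum_single hj₂i ε, sub_self]
    have hb1 : ∀ j, |x j + w j| ≤ 1 := by
      intro j
      rcases eq_or_ne j j₁ with rfl | h1
      · rw [hw1]
        have := neg_abs_le (x j); have := le_abs_self (x j)
        rw [abs_le]; constructor <;> linarith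
      rcases eq_or_ne j j₂ with rfl | h2
      · rw [hw2]
        have := neg_abs_le (x j); have := le_abs_self (x j)
        rw [abs_le]; constructor <;> linarith
      · rw [hw0 j h1 h2, add_zero]; exact hxc j
    have hb2 : ∀ j, |x j + -w j| ≤ 1 := by
      intro j
      rcases eq_or_ne j j₁ with rfl | h1
      · rw [hw1]
        have := neg_abs_le (x j); have := le_abs_self (x j)
        rw [abs_le]; constructor <;> linarith
      rcases eq_or_ne j j₂ with rfl | h2
      · rw [hw2]
        have := neg_abs_le (x j); have := le_abs_self (x j)
        rw [abs_le]; constructor <;> linarith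
      · rw [hw0 j h1 h2, neg_zero, add_zero]; exact hxc j
    have hm1 := perturb_mem w ⟨hxc, hxs⟩ hb1 hwsum
    have hm2 := perturb_mem (-w) ⟨hxc, hxs⟩ (fun j => hb2 j)
      (by show ∑ j ∈ idx d, -(w j) = 0
          rw [Finset.sum_neg_distrib, hwsum, neg_zero])
    have h0 := no_move hx hm1 hm2
    have : w j₁ = 0 := by rw [h0]; rfl
    rw [hw1] at this
    linarith
  -- Step C : t.nonempty
  have hC : t.Nonempty := by
    rw [Finset.nonempty_iff_ne_empty]
    intro hemp
    refine sum_ne_zero hd hd0 x (fun j hj => ?_) hxs'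
    by_contra hcon
    have : j ∈ t := Finset.mem_filter.mpr ⟨hj, hcon⟩
    rw [hemp] at this
    exact absurd this (Finset.notMem_empty j)
  have hcard1 : t.card = 1 := le_antisymm hB (Finset.one_le_card.mpr hC)
  obtain ⟨i, hti⟩ := Finset.card_eq_one.mp hcard1
  have hit : i ∈ t := by rw [hti]; exact Finset.mem_singleton_self i
  obtain ⟨hii, hin⟩ := Finset.mem_filter.mp hit
  have hil : (i : ℕ) < d - 1 := mem_idx.mp hii
  have hother : ∀ j ∈ idx d, j ≠ i → x j = 1 ∨ x j = -1 := by
    intro j hj hne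
    by_contra hcon
    have : j ∈ t := Finset.mem_filter.mpr ⟨hj, hcon⟩
    rw [hti, Finset.mem_singleton] at this
    exact hne this
  -- Step D : compute x i and the set S
  set S : Finset (Fin d) := ((idx d).erase i).filter (fun j => x j = 1) with hS
  have hpm : ∀ j ∈ (idx d).erase i, x j = 1 ∨ x j = -1 := fun j hj =>
    hother j (Finset.mem_erase.mp hj).2 (Finset.mem_erase.mp hj).1
  have hsplit : x i + ∑ j ∈ (idx d).erase i, x j = 0 := by
    rw [Finset.add_sum_erase _ _ hii]; exact hxs'
  rw [sum_pm _ _ hpm] at hsplit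
  have hcerase : ((idx d).erase i).card = d - 1 - 1 := by
    rw [Finset.card_erase_of_mem hii, card_idx hd0]
  rw [hcerase] at hsplit
  set k : ℕ := (d - 2) / 2 with hk
  have h2k : d - 1 - 1 = 2 * k := by obtain ⟨r, hr⟩ := hd; omega
  have habsi : |x i| < 1 := abs_lt_one (hxc i) hin
  obtain ⟨hilt1, hilt2⟩ := abs_lt.mp habsi
  have hScard : S.card = k ∧ x i = 0 := by
    rw [h2k] at hsplit
    push_cast at hsplit
    rcases lt_trichotomy S.card k with h | h | h
    · exfalso
      have : (S.card : ℝ) + 1 ≤ (k : ℝ) := by exact_mod_cast Nat.succ_le_of_lt h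
      linarith
    · exact ⟨h, by rw [h] at hsplit; linarith⟩
    · exfalso
      have : (k : ℝ) + 1 ≤ (S.card : ℝ) := by exact_mod_cast Nat.succ_le_of_lt h
      linarith
  obtain ⟨hScard', hxi0⟩ := hScard
  -- assemble
  set b : Bool := if x L = 1 then true else false with hb
  refine ⟨(b, ⟨i, S⟩), mem_T.mpr ⟨hil, Finset.filter_subset _ _, hScard'⟩, ?_⟩
  refine PiLp.ext fun j => ?_
  show phi d b i S j = x j
  rcases Nat.lt_or_ge (j : ℕ) (d - 1) with hjl | hjg
  · rcases eq_or_ne j i with rfl | hne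
    · rw [phi_apply_i hil, hxi0]
    · rw [phi_apply_other hjl hne]
      rcases hother j (mem_idx.mpr hjl) hne with h | h
      · rw [if_pos ?_, h]
        exact Finset.mem_filter.mpr ⟨Finset.mem_erase.mpr ⟨hne, mem_idx.mpr hjl⟩, h⟩
      · rw [if_neg ?_, h]
        intro hjS
        have := (Finset.mem_filter.mp hjS).2
        rw [this] at h
        norm_num at h
  · have hjL : j = L := by
      apply Fin.ext
      have := j.isLt
      simp only [hL]
      omega
    subst hjL
    rw [phi_apply_last rfl]
    rcases hA with h | h
    · rw [hb, if_pos h, if_pos rfl, h]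
    · have hne : ¬ x L = 1 := by rw [h]; norm_num
      rw [hb, if_neg hne, h]
      norm_num


lemma ncard_eq (hd : Even d) (hd0 : 0 < d) :
    (Set.extremePoints ℝ (cube d ∩ hyp d)).ncard
      = 2 * (d - 1) * Nat.choose (d - 2) ((d - 2) / 2) := by
  classical
  have he : Set.extremePoints ℝ (cube d ∩ hyp d) = ↑((T d).image (phi' d)) := by
    apply Set.eq_of_subset_of_subset
    · intro x hx
      obtain ⟨p, hp, hpe⟩ := extreme_subset hd hd0 hx
      exact Finset.mem_coe.mpr (Finset.mem_image.mpr ⟨p, hp, hpe⟩)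
    · intro x hx
      obtain ⟨p, hp, hpe⟩ := Finset.mem_image.mp (Finset.mem_coe.mp hx)
      rw [← hpe]
      exact phi_extreme hd hd0 hp
  rw [he, Set.ncard_coe_finset, Finset.card_image_of_injOn phi_injOn, card_T hd0, ← mul_assoc]

lemma arith {d : ℕ} (hd : Even d) (hd0 : 0 < d) :
    2 * (d - 1) * Nat.choose (d - 2) ((d - 2) / 2) = (d / 2) * Nat.choose d (d / 2) := by
  obtain ⟨m, rfl⟩ := hd
  obtain ⟨n, rfl⟩ : ∃ n, m = n + 1 := ⟨m - 1, by omega⟩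
  have e1 : (n + 1) + (n + 1) - 1 = 2 * n + 1 := by omega
  have e2 : (n + 1) + (n + 1) - 2 = 2 * n := by omega
  have e3 : 2 * n / 2 = n := by omega
  have e4 : ((n + 1) + (n + 1)) / 2 = n + 1 := by omega
  have e5 : (n + 1) + (n + 1) = 2 * (n + 1) := by ring
  rw [e1, e2, e3, e4, e5]
  have h := Nat.succ_mul_centralBinom_succ n
  unfold Nat.centralBinom at h
  exact h.symm

end CubeSlice


/-- Let `d` be even, `d > 0`, and `u = (1,…,1,0)`, so that
`u^⊥ = {x | x_1 + ⋯ + x_{d-1} = 0}`. Then `u^⊥` contains no vertex of the cube `C_d`, it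
intersects no edge of `C_d` parallel to the `d`-th coordinate direction, and `C_d ∩ u^⊥` has
exactly `2(d-1) · choose (d-2) ((d-2)/2) = (d/2) · choose d (d/2)` vertices (extreme points). -/
theorem even_dim_central_slice_vertices (d : ℕ) (hd : Even d) (hd0 : 0 < d) :
    (∀ v ∈ cubeVertices d,
      v ∉ {x : EuclideanSpace ℝ (Fin d) | ∑ i ∈ Finset.univ.filter (fun i : Fin d => (i : ℕ) < d - 1), x i = 0}) ∧
    (∀ a : EuclideanSpace ℝ (Fin d),
      (∀ j : Fin d, (j : ℕ) < d - 1 → (a j = 1 ∨ a j = -1)) →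
      {x ∈ cube d | ∀ j : Fin d, (j : ℕ) < d - 1 → x j = a j} ∩
        {x : EuclideanSpace ℝ (Fin d) | ∑ i ∈ Finset.univ.filter (fun i : Fin d => (i : ℕ) < d - 1), x i = 0} = ∅) ∧
    (Set.extremePoints ℝ (cube d ∩
        {x : EuclideanSpace ℝ (Fin d) | ∑ i ∈ Finset.univ.filter (fun i : Fin d => (i : ℕ) < d - 1), x i = 0})).ncard
      = 2 * (d - 1) * Nat.choose (d - 2) ((d - 2) / 2) ∧
    2 * (d - 1) * Nat.choose (d - 2) ((d - 2) / 2) = (d / 2) * Nat.choose d (d / 2) := by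
  have hhyp : {x : EuclideanSpace ℝ (Fin d) | ∑ i ∈ Finset.univ.filter (fun i : Fin d => (i : ℕ) < d - 1), x i = 0}
      = CubeSlice.hyp d := rfl
  refine ⟨?_, ?_, ?_, CubeSlice.arith hd hd0⟩
  · intro v hv hmem
    exact CubeSlice.sum_ne_zero hd hd0 v (fun j _ => hv j) hmem
  · intro a ha
    rw [Set.eq_empty_iff_forall_notMem]
    rintro x ⟨⟨hxc, hxa⟩, hxs⟩
    refine CubeSlice.sum_ne_zero hd hd0 x (fun j hj => ?_) hxs
    have hjl := CubeSlice.mem_idx.mp hj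
    rw [hxa j hjl]
    exact ha j hjl
  · rw [hhyp]
    exact CubeSlice.ncard_eq hd hd0
end
end
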